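/- arXiv:2205.06470 — 7 statements merged into one kernel-verified Lean document; each statement's English description precedes it below -/
import Mathlib

section
/- Let m be a positive integer and D, E ⊆ [m]. For i ∈ {0,1,2} let T_i be the number of ordered pairs (X, Y) of nonempty subsets of [m] with X ≠ Y, Y ∩ E = ∅, and χ(X|D) + χ(X ⊕ Y|D) = i, where X ⊕ Y = (X ∪ Y) \ (X ∩ Y) is the symmetric difference. Then T_0 = 2^m(2^(m−|E|) − 1) + 2^(m−|D|)(1 + 2^(m−|D∪E|) − 2^(m+1−|E|)), T_1 = 2(2^(m−|D|) − 1)(2^(m−|E|) − 2^(m−|D∪E|)), and T_2 = (2^(m−|D|) − 2)(2^(m−|D∪E|) − 1). -/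
/-- χ(X|D) = 1 if X ∩ D = ∅ and 0 otherwise. -/
def chi {m : ℕ} (X D : Finset (Fin m)) : ℕ := if X ∩ D = ∅ then 1 else 0

/-!
Let `V` be the set of admissible pairs and `g (X, Y) = χ(X|D) + χ(X ⊕ Y|D) ∈ {0, 1, 2}`, so that
`T₀ + T₁ + T₂ = |V|` and `T₁ + 2 T₂ = ∑_V g`. The involution `(X, Y) ↦ (X ⊕ Y, Y)` of `V` turns
`∑_V χ(X ⊕ Y|D)` into `∑_V χ(X|D)`, the number of pairs of `V` with `X ∩ D = ∅`, while `T₂` counts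
the pairs with `X ∩ D = Y ∩ D = ∅`. Each of `|V|`, this number and `T₂` counts pairs `X ≠ Y` of
nonempty sets with `X ∩ S = ∅` and `Y ∩ S' = ∅`, and there are
`(2^(m-|S|) - 1)(2^(m-|S'|) - 1) - (2^(m-|S ∪ S'|) - 1)` of those.
-/

open Finset

theorem card_filter_product_ne {β : Type*} [DecidableEq β] (s t : Finset β) :
    (#{p ∈ s ×ˢ t | p.1 ≠ p.2} : ℤ) = #s * #t - #(s ∩ t) := by
  have hdiag : {p ∈ s ×ˢ t | p.1 = p.2} = (s ∩ t).image fun x => (x, x) := by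
    ext ⟨x, y⟩
    simp only [mem_filter, mem_product, mem_image, mem_inter, Prod.mk.injEq]
    constructor
    · rintro ⟨⟨hx, hy⟩, rfl⟩
      exact ⟨x, ⟨hx, hy⟩, rfl, rfl⟩
    · rintro ⟨z, ⟨hs, ht⟩, rfl, rfl⟩
      exact ⟨⟨hs, ht⟩, rfl⟩
  have hsplit := card_filter_add_card_filter_not (s := s ×ˢ t) (fun p : β × β => p.1 = p.2)
  rw [card_product, hdiag, card_image_of_injective _ fun x y h => (Prod.ext_iff.1 h).1]
    at hsplit
  simp only [ne_eq]
  rw [eq_sub_iff_add_eq, add_comm]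
  exact_mod_cast hsplit

theorem card_eq_card_filter_eq_zero_add_one_add_two {β : Type*} {s : Finset β} {g : β → ℕ}
    (hg : ∀ x ∈ s, g x ≤ 2) :
    #s = #{x ∈ s | g x = 0} + #{x ∈ s | g x = 1} + #{x ∈ s | g x = 2} := by
  rw [card_eq_sum_card_fiberwise (f := g) (t := range 3)
    (fun x hx => mem_range.2 (Nat.lt_succ_of_le (hg x hx)))]
  simp [sum_range_succ]

theorem sum_eq_card_filter_eq_one_add_two_mul {β : Type*} {s : Finset β} {g : β → ℕ}
    (hg : ∀ x ∈ s, g x ≤ 2) :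
    ∑ x ∈ s, g x = #{x ∈ s | g x = 1} + 2 * #{x ∈ s | g x = 2} := by
  have hfiber : ∀ k, ∑ x ∈ s with g x = k, g x = #{x ∈ s | g x = k} * k :=
    fun k => sum_const_nat fun x hx => (mem_filter.1 hx).2
  rw [← sum_fiberwise_of_maps_to (t := range 3)
    (fun x hx => mem_range.2 (Nat.lt_succ_of_le (hg x hx))) g]
  simp only [sum_range_succ, sum_range_zero, hfiber]
  ring

theorem symmDiff_inter_eq_empty_iff {α : Type*} [DecidableEq α] {X Y D : Finset α} :
    symmDiff X Y ∩ D = ∅ ↔ X ∩ D = Y ∩ D := by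
  rw [← inf_eq_inter, inf_symmDiff_distrib_right, ← bot_eq_empty, symmDiff_eq_bot]
  rfl

section SubsetPairs
variable {α : Type*} [Fintype α] [DecidableEq α]

def nonemptyDisjoint (S : Finset α) : Finset (Finset α) := {Y | Y ≠ ∅ ∧ Y ∩ S = ∅}

theorem card_nonemptyDisjoint (S : Finset α) :
    (#(nonemptyDisjoint S) : ℤ) = 2 ^ (Fintype.card α - #S) - 1 := by
  have h : nonemptyDisjoint S = Sᶜ.powerset.erase ∅ := by
    ext Y
    simp [nonemptyDisjoint, subset_compl_iff_disjoint_right, disjoint_iff_inter_eq_empty]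
  rw [h, card_erase_of_mem (empty_mem_powerset _), card_powerset, card_compl,
    Nat.cast_sub Nat.one_le_two_pow]
  norm_num

theorem nonemptyDisjoint_inter (S T : Finset α) :
    nonemptyDisjoint S ∩ nonemptyDisjoint T = nonemptyDisjoint (S ∪ T) := by
  ext Y
  simp only [nonemptyDisjoint, mem_inter, mem_filter, mem_univ, true_and,
    inter_union_distrib_left, union_eq_empty]
  tauto

theorem card_filter_nonemptyDisjoint_product_ne (S T : Finset α) :
    (#{p ∈ nonemptyDisjoint S ×ˢ nonemptyDisjoint T | p.1 ≠ p.2} : ℤ) =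
      (2 ^ (Fintype.card α - #S) - 1) * (2 ^ (Fintype.card α - #T) - 1)
        - (2 ^ (Fintype.card α - #(S ∪ T)) - 1) := by
  rw [card_filter_product_ne, nonemptyDisjoint_inter, card_nonemptyDisjoint,
    card_nonemptyDisjoint, card_nonemptyDisjoint]

def validPairs (E : Finset α) : Finset (Finset α × Finset α) :=
  {p ∈ nonemptyDisjoint ∅ ×ˢ nonemptyDisjoint E | p.1 ≠ p.2}

theorem mem_validPairs {E : Finset α} {p : Finset α × Finset α} :
    p ∈ validPairs E ↔ p.1 ≠ ∅ ∧ p.2 ≠ ∅ ∧ p.1 ≠ p.2 ∧ p.2 ∩ E = ∅ := by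
  simp only [validPairs, nonemptyDisjoint, mem_filter, mem_product, mem_univ, true_and,
    inter_empty]
  tauto

theorem filter_univ_product_eq_filter_validPairs (E : Finset α)
    (P : Finset α × Finset α → Prop) [DecidablePred P] :
    (univ ×ˢ univ).filter (fun XY : Finset α × Finset α =>
        XY.1 ≠ ∅ ∧ XY.2 ≠ ∅ ∧ XY.1 ≠ XY.2 ∧ XY.2 ∩ E = ∅ ∧ P XY) =
      {p ∈ validPairs E | P p} := by
  ext p
  simp only [mem_filter, mem_validPairs, mem_product, mem_univ, true_and, and_assoc]

theorem sum_validPairs_symmDiff {M : Type*} [AddCommMonoid M] (E : Finset α)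
    (f : Finset α → M) :
    ∑ p ∈ validPairs E, f (symmDiff p.1 p.2) = ∑ p ∈ validPairs E, f p.1 := by
  have hmaps : ∀ p ∈ validPairs E, (symmDiff p.1 p.2, p.2) ∈ validPairs E := by
    rintro ⟨X, Y⟩ hp
    rw [mem_validPairs] at hp ⊢
    obtain ⟨hX, hY, hXY, hYE⟩ := hp
    refine ⟨?_, hY, ?_, hYE⟩
    · rwa [← bot_eq_empty, Ne, symmDiff_eq_bot]
    · rwa [Ne, symmDiff_eq_right, bot_eq_empty]
  exact sum_nbij' (fun p => (symmDiff p.1 p.2, p.2)) (fun p => (symmDiff p.1 p.2, p.2)) hmaps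
    hmaps (fun p _ => by simp) (fun p _ => by simp) (fun p _ => rfl)

theorem filter_validPairs_inter_eq_empty (D E : Finset α) :
    {p ∈ validPairs E | p.1 ∩ D = ∅} =
      {p ∈ nonemptyDisjoint D ×ˢ nonemptyDisjoint E | p.1 ≠ p.2} := by
  ext p
  simp only [mem_filter, mem_validPairs, mem_product, nonemptyDisjoint, mem_univ, true_and]
  tauto

end SubsetPairs

section Chi
variable {m : ℕ}

theorem chi_le_one (X D : Finset (Fin m)) : chi X D ≤ 1 := by
  unfold chi
  split_ifs <;> simp

theorem chi_add_chi_symmDiff_eq_two_iff {X Y D : Finset (Fin m)} :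
    chi X D + chi (symmDiff X Y) D = 2 ↔ X ∩ D = ∅ ∧ Y ∩ D = ∅ := by
  simp only [chi, symmDiff_inter_eq_empty_iff]
  split_ifs <;> simp_all [eq_comm (a := (∅ : Finset (Fin m)))]

theorem sum_validPairs_chi_add_chi_symmDiff (D E : Finset (Fin m)) :
    ∑ p ∈ validPairs E, (chi p.1 D + chi (symmDiff p.1 p.2) D) =
      2 * #{p ∈ validPairs E | p.1 ∩ D = ∅} := by
  rw [sum_add_distrib, sum_validPairs_symmDiff E (chi · D), ← two_mul, card_filter]
  rfl

theorem filter_validPairs_chi_add_chi_symmDiff_eq_two (D E : Finset (Fin m)) :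
    {p ∈ validPairs E | chi p.1 D + chi (symmDiff p.1 p.2) D = 2} =
      {p ∈ nonemptyDisjoint D ×ˢ nonemptyDisjoint (D ∪ E) | p.1 ≠ p.2} := by
  ext p
  simp only [mem_filter, mem_validPairs, mem_product, nonemptyDisjoint, mem_univ, true_and,
    chi_add_chi_symmDiff_eq_two_iff, inter_union_distrib_left, union_eq_empty]
  tauto

end Chi

theorem stmt2_general (m : ℕ) (D E : Finset (Fin m)) :
    (((Finset.univ ×ˢ Finset.univ).filter
        (fun XY : Finset (Fin m) × Finset (Fin m) =>
          XY.1 ≠ ∅ ∧ XY.2 ≠ ∅ ∧ XY.1 ≠ XY.2 ∧ XY.2 ∩ E = ∅ ∧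
          chi XY.1 D + chi (symmDiff XY.1 XY.2) D = 0)).card : ℤ)
      = 2 ^ m * (2 ^ (m - E.card) - 1)
        + 2 ^ (m - D.card) * (1 + 2 ^ (m - (D ∪ E).card) - 2 ^ (m + 1 - E.card)) ∧
    (((Finset.univ ×ˢ Finset.univ).filter
        (fun XY : Finset (Fin m) × Finset (Fin m) =>
          XY.1 ≠ ∅ ∧ XY.2 ≠ ∅ ∧ XY.1 ≠ XY.2 ∧ XY.2 ∩ E = ∅ ∧
          chi XY.1 D + chi (symmDiff XY.1 XY.2) D = 1)).card : ℤ)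
      = 2 * (2 ^ (m - D.card) - 1) * (2 ^ (m - E.card) - 2 ^ (m - (D ∪ E).card)) ∧
    (((Finset.univ ×ˢ Finset.univ).filter
        (fun XY : Finset (Fin m) × Finset (Fin m) =>
          XY.1 ≠ ∅ ∧ XY.2 ≠ ∅ ∧ XY.1 ≠ XY.2 ∧ XY.2 ∩ E = ∅ ∧
          chi XY.1 D + chi (symmDiff XY.1 XY.2) D = 2)).card : ℤ)
      = (2 ^ (m - D.card) - 2) * (2 ^ (m - (D ∪ E).card) - 1) := by
  simp only [filter_univ_product_eq_filter_validPairs]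
  have hle : ∀ p ∈ validPairs E, chi p.1 D + chi (symmDiff p.1 p.2) D ≤ 2 :=
    fun p _ => add_le_add (chi_le_one _ _) (chi_le_one _ _)
  have htotal := congrArg (Nat.cast : ℕ → ℤ) (card_eq_card_filter_eq_zero_add_one_add_two hle)
  have hweighted := congrArg (Nat.cast : ℕ → ℤ) (sum_eq_card_filter_eq_one_add_two_mul hle)
  rw [sum_validPairs_chi_add_chi_symmDiff, filter_validPairs_inter_eq_empty] at hweighted
  rw [filter_validPairs_chi_add_chi_symmDiff_eq_two] at htotal hweighted ⊢
  have hall := card_filter_nonemptyDisjoint_product_ne (∅ : Finset (Fin m)) E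
  have hD := card_filter_nonemptyDisjoint_product_ne D E
  have hDDE := card_filter_nonemptyDisjoint_product_ne D (D ∪ E)
  rw [← validPairs] at hall
  simp only [Fintype.card_fin, card_empty, Nat.sub_zero, empty_union, ← union_assoc,
    union_self] at hall hD hDDE
  rw [Nat.sub_add_comm (by simpa using card_le_univ E), pow_succ]
  push_cast at htotal hweighted
  refine ⟨by linarith, by linarith, by linarith⟩

/-- counts T_0, T_1, T_2 of pairs (X, Y) of nonempty subsets of [m] with
X ≠ Y, Y ∩ E = ∅ and χ(X|D) + χ(X ⊕ Y|D) = i, where X ⊕ Y is the symmetric difference. -/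
theorem stmt2 (m : ℕ) (hm : 0 < m) (D E : Finset (Fin m)) :
    (((Finset.univ ×ˢ Finset.univ).filter
        (fun XY : Finset (Fin m) × Finset (Fin m) =>
          XY.1 ≠ ∅ ∧ XY.2 ≠ ∅ ∧ XY.1 ≠ XY.2 ∧ XY.2 ∩ E = ∅ ∧
          chi XY.1 D + chi (symmDiff XY.1 XY.2) D = 0)).card : ℤ)
      = 2 ^ m * (2 ^ (m - E.card) - 1)
        + 2 ^ (m - D.card) * (1 + 2 ^ (m - (D ∪ E).card) - 2 ^ (m + 1 - E.card)) ∧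
    (((Finset.univ ×ˢ Finset.univ).filter
        (fun XY : Finset (Fin m) × Finset (Fin m) =>
          XY.1 ≠ ∅ ∧ XY.2 ≠ ∅ ∧ XY.1 ≠ XY.2 ∧ XY.2 ∩ E = ∅ ∧
          chi XY.1 D + chi (symmDiff XY.1 XY.2) D = 1)).card : ℤ)
      = 2 * (2 ^ (m - D.card) - 1) * (2 ^ (m - E.card) - 2 ^ (m - (D ∪ E).card)) ∧
    (((Finset.univ ×ˢ Finset.univ).filter
        (fun XY : Finset (Fin m) × Finset (Fin m) =>
          XY.1 ≠ ∅ ∧ XY.2 ≠ ∅ ∧ XY.1 ≠ XY.2 ∧ XY.2 ∩ E = ∅ ∧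
          chi XY.1 D + chi (symmDiff XY.1 XY.2) D = 2)).card : ℤ)
      = (2 ^ (m - D.card) - 2) * (2 ^ (m - (D ∪ E).card) - 1) :=
  stmt2_general m D E
end

section
/- With m ≥ 2 and D, E, F ⊆ [m] with |D|, |E|, |F| ≤ m−1, the kernel of the map f : a ↦ c_a = (a·l)_{l∈L}, i.e. the set { a = (p, q+ur) : p, q, r ∈ Z_2^m and c_a = 0 }, has exactly 2 elements if |D| = |E| = m−1, and is equal to {0} otherwise. -/
open Finset

/-- The ring Z_2[u] with u² = 0: dual numbers over Z_2. -/
abbrev R2 : Type := DualNumber (ZMod 2)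

/-- The support of a vector in Z_2^m, as a finset of coordinates. -/
def suppF {m : ℕ} (w : Fin m → ZMod 2) : Finset (Fin m) :=
  Finset.univ.filter fun i => w i ≠ 0

/-- Inner product ⟨x,y⟩ = Σ_i x_i y_i in Z_2. -/
def ip {m : ℕ} (x y : Fin m → ZMod 2) : ZMod 2 := ∑ i, x i * y i

/-- The defining set L = Δ_D^c × Δ_E^c × Δ_F^c, parametrized by triples (t₁,t₂,t₃). -/
def Lset (m : ℕ) (D E F : Finset (Fin m)) :
    Finset ((Fin m → ZMod 2) × (Fin m → ZMod 2) × (Fin m → ZMod 2)) :=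
  Finset.univ.filter fun t => ¬ suppF t.1 ⊆ D ∧ ¬ suppF t.2.1 ⊆ E ∧ ¬ suppF t.2.2 ⊆ F

/-- The codeword c_a = (a·l)_{l∈L} for a = (p, q+ur), where
a·l = ⟨q,t₂⟩ + u(⟨p,t₁⟩ + ⟨q,t₃⟩ + ⟨r,t₂⟩). -/
def cword {m : ℕ} (D E F : Finset (Fin m)) (p q r : Fin m → ZMod 2) :
    ↥(Lset m D E F) → R2 := fun l =>
  TrivSqZeroExt.inl (ip q l.val.2.1) +
    TrivSqZeroExt.inr (ip p l.val.1 + ip q l.val.2.2 + ip r l.val.2.1)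

/-- Lee weight of a single element q + ur of Z_2[u]: wt_H(r) + wt_H(q+r). -/
def leeWtOne (x : R2) : ℕ :=
  (if TrivSqZeroExt.snd x ≠ 0 then 1 else 0) +
    (if TrivSqZeroExt.fst x + TrivSqZeroExt.snd x ≠ 0 then 1 else 0)

/-- Lee weight of a vector over Z_2[u]: sum of coordinate Lee weights. -/
def leeWt {ι : Type} [Fintype ι] (c : ι → R2) : ℕ := ∑ i, leeWtOne (c i)

/-- The Gray map: coordinatewise q + ur ↦ (r, q + r). -/
def gray {ι : Type} (c : ι → R2) : ι ⊕ ι → ZMod 2 :=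
  Sum.elim (fun i => TrivSqZeroExt.snd (c i))
    (fun i => TrivSqZeroExt.fst (c i) + TrivSqZeroExt.snd (c i))

/-- The code C_L as a set of words over Z_2[u] indexed by L. -/
def CL (m : ℕ) (D E F : Finset (Fin m)) : Set (↥(Lset m D E F) → R2) :=
  { c | ∃ p q r : Fin m → ZMod 2, c = cword D E F p q r }

/-!
A word `a = (p, q + ur)` is in the kernel iff `⟨q, t₂⟩ = 0` and `⟨p, t₁⟩ + ⟨q, t₃⟩ + ⟨r, t₂⟩ = 0`
for all `t₁ ∈ Δ_Dᶜ`, `t₂ ∈ Δ_Eᶜ`, `t₃ ∈ Δ_Fᶜ`. Testing against unit vectors `e_j` (`j ∉ S`) and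
sums `e_i + e_j` shows that a linear form `⟨x, ·⟩` that is constant `= c` on `Δ_Sᶜ` is `x = c·1_{Sᶜ}`,
and that `c = 0` as soon as `Sᶜ` has two elements. Hence `q = 0`, while `p` and `r` are such forms with
a common constant `c`; `c = 0` gives `a = 0`, and `c = 1` is possible exactly when `Dᶜ = {j}` and
`Eᶜ = {k}`, giving the second kernel element `(e_j, 0, e_k)`.
-/

open Matrix

variable {m : ℕ} {S : Finset (Fin m)}

lemma ip_eq_dotProduct (x y : Fin m → ZMod 2) : ip x y = x ⬝ᵥ y := rfl

lemma card_compl_fin (S : Finset (Fin m)) : Sᶜ.card = m - S.card := by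
  rw [Finset.card_compl, Fintype.card_fin]

lemma not_suppF_subset_iff {t : Fin m → ZMod 2} : ¬ suppF t ⊆ S ↔ ∃ i ∉ S, t i ≠ 0 := by
  simp [suppF, Finset.not_subset, and_comm]

lemma single_not_suppF_subset {j : Fin m} (hj : j ∉ S) :
    ¬ suppF (Pi.single j 1 : Fin m → ZMod 2) ⊆ S :=
  not_suppF_subset_iff.2 ⟨j, hj, by simp⟩

lemma single_add_single_not_suppF_subset {i j : Fin m} (hij : i ≠ j) (hj : j ∉ S) :
    ¬ suppF (Pi.single i 1 + Pi.single j 1 : Fin m → ZMod 2) ⊆ S :=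
  not_suppF_subset_iff.2 ⟨j, hj, by simp [Pi.single_eq_of_ne hij.symm]⟩

def ipLevel (S : Finset (Fin m)) (c : ZMod 2) : Set (Fin m → ZMod 2) :=
  {x | ∀ t, ¬ suppF t ⊆ S → ip x t = c}

lemma ip_single_add_single (x : Fin m → ZMod 2) (i j : Fin m) :
    ip x (Pi.single i 1 + Pi.single j 1) = x i + x j := by
  simp [ip_eq_dotProduct, dotProduct_add, dotProduct_single]

lemma apply_of_mem_ipLevel {x : Fin m → ZMod 2} {c : ZMod 2} (hx : x ∈ ipLevel S c)
    {j : Fin m} (hj : j ∉ S) (i : Fin m) : x i = if i ∈ S then 0 else c := by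
  have hsingle : ∀ {k}, k ∉ S → x k = c := fun hk => by
    simpa [ip_eq_dotProduct] using hx _ (single_not_suppF_subset hk)
  split_ifs with hi
  · have hpair := hx _ (single_add_single_not_suppF_subset (ne_of_mem_of_not_mem hi hj) hj)
    rw [ip_single_add_single, hsingle hj] at hpair
    simpa using hpair
  · exact hsingle hi

lemma ipLevel_zero (hS : Sᶜ.Nonempty) : ipLevel S 0 = {0} := by
  obtain ⟨j, hj⟩ := hS
  ext x
  refine ⟨fun hx => funext fun i => by
    simpa using apply_of_mem_ipLevel hx (Finset.mem_compl.1 hj) i, ?_⟩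
  rintro rfl t -
  exact zero_dotProduct t

lemma ipLevel_one_eq_empty (h : 1 < Sᶜ.card) : ipLevel S 1 = ∅ := by
  obtain ⟨j, hj, k, hk, hjk⟩ := Finset.one_lt_card.1 h
  rw [Finset.mem_compl] at hj hk
  refine Set.eq_empty_of_forall_notMem fun x hx => ?_
  have hpair := hx _ (single_add_single_not_suppF_subset hjk hk)
  rw [ip_single_add_single, apply_of_mem_ipLevel hx hj, apply_of_mem_ipLevel hx hj,
    if_neg hj, if_neg hk] at hpair
  exact absurd hpair (by decide)

lemma ipLevel_one_of_compl_eq_singleton {j : Fin m} (h : Sᶜ = {j}) :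
    ipLevel S 1 = {Pi.single j 1} := by
  have hS : ∀ i, i ∉ S ↔ i = j := fun i => by rw [← Finset.mem_compl, h, Finset.mem_singleton]
  ext x
  constructor
  · intro hx
    funext i
    rw [apply_of_mem_ipLevel hx ((hS j).2 rfl) i, Pi.single_apply]
    by_cases hij : i = j
    · simp [hij, (hS j).2 rfl]
    · simp [hij, not_not.1 (mt (hS i).1 hij)]
  · rintro rfl t ht
    obtain ⟨i, hi, hti⟩ := not_suppF_subset_iff.1 ht
    rw [(hS i).1 hi] at hti
    rw [ip_eq_dotProduct, single_dotProduct, one_mul]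
    revert hti
    generalize t j = a
    revert a
    decide

variable {D E F : Finset (Fin m)}

lemma cword_eq_zero_iff (p q r : Fin m → ZMod 2) :
    cword D E F p q r = 0 ↔
      ∀ t₁ t₂ t₃ : Fin m → ZMod 2, ¬ suppF t₁ ⊆ D → ¬ suppF t₂ ⊆ E → ¬ suppF t₃ ⊆ F →
        ip q t₂ = 0 ∧ ip p t₁ + ip q t₃ + ip r t₂ = 0 := by
  constructor
  · intro h t₁ t₂ t₃ h₁ h₂ h₃
    have hl : (t₁, t₂, t₃) ∈ Lset m D E F := by simp [Lset, h₁, h₂, h₃]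
    simpa [cword, TrivSqZeroExt.ext_iff] using congrFun h ⟨_, hl⟩
  · intro h
    funext ⟨⟨t₁, t₂, t₃⟩, hl⟩
    simp only [Lset, Finset.mem_filter, Finset.mem_univ, true_and] at hl
    obtain ⟨e₁, e₂⟩ := h t₁ t₂ t₃ hl.1 hl.2.1 hl.2.2
    simp [cword, e₁, e₂]

lemma cword_eq_zero_iff_exists_ipLevel (hD : Dᶜ.Nonempty) (hE : Eᶜ.Nonempty)
    (hF : Fᶜ.Nonempty) (p q r : Fin m → ZMod 2) :
    cword D E F p q r = 0 ↔ q = 0 ∧ ∃ c, p ∈ ipLevel D c ∧ r ∈ ipLevel E c := by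
  obtain ⟨jD, hjD⟩ := hD
  obtain ⟨jE, hjE⟩ := hE
  obtain ⟨jF, hjF⟩ := hF
  have eD := single_not_suppF_subset (Finset.mem_compl.1 hjD)
  have eE := single_not_suppF_subset (Finset.mem_compl.1 hjE)
  have eF := single_not_suppF_subset (Finset.mem_compl.1 hjF)
  rw [cword_eq_zero_iff]
  constructor
  · intro h
    have hq : q = 0 := by
      rw [← Set.mem_singleton_iff, ← ipLevel_zero ⟨jE, hjE⟩]
      exact fun t₂ h₂ => (h _ t₂ _ eD h₂ eF).1
    subst hq
    have hpr : ∀ t₁ t₂, ¬ suppF t₁ ⊆ D → ¬ suppF t₂ ⊆ E → ip p t₁ = ip r t₂ :=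
      fun t₁ t₂ h₁ h₂ => by
        simpa [ip_eq_dotProduct, CharTwo.add_eq_zero] using (h t₁ t₂ _ h₁ h₂ eF).2
    exact ⟨rfl, _, fun t₁ h₁ => hpr t₁ _ h₁ eE,
      fun t₂ h₂ => (hpr _ t₂ eD h₂).symm.trans (hpr _ _ eD eE)⟩
  · rintro ⟨rfl, c, hp, hr⟩ t₁ t₂ t₃ h₁ h₂ -
    have hzero : ∀ t : Fin m → ZMod 2, ip 0 t = 0 := zero_dotProduct
    rw [hzero, hzero, hp t₁ h₁, hr t₂ h₂, add_zero]
    exact ⟨rfl, CharTwo.add_self_eq_zero c⟩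

lemma exists_zmod_two {P : ZMod 2 → Prop} : (∃ c, P c) ↔ P 0 ∨ P 1 := Fin.exists_fin_two

lemma setOf_cword_eq_zero (hD : Dᶜ.Nonempty) (hE : Eᶜ.Nonempty) (hF : Fᶜ.Nonempty) :
    {a : (Fin m → ZMod 2) × (Fin m → ZMod 2) × (Fin m → ZMod 2) |
        cword D E F a.1 a.2.1 a.2.2 = 0} =
      {(0, 0, 0)} ∪ ipLevel D 1 ×ˢ {0} ×ˢ ipLevel E 1 := by
  ext ⟨p, q, r⟩
  simp only [Set.mem_ofPred_eq, cword_eq_zero_iff_exists_ipLevel hD hE hF, exists_zmod_two,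
    ipLevel_zero hD, ipLevel_zero hE, Set.mem_union, Set.mem_prod, Set.mem_singleton_iff,
    Prod.mk.injEq]
  tauto

/-- the kernel of f : a ↦ c_a has exactly 2 elements if |D| = |E| = m−1,
and equals {0} otherwise. -/
theorem stmt9 (m : ℕ) (hm : 2 ≤ m) (D E F : Finset (Fin m))
    (hD : D.card ≤ m - 1) (hE : E.card ≤ m - 1) (hF : F.card ≤ m - 1) :
    ((D.card = m - 1 ∧ E.card = m - 1) →
      Nat.card {a : (Fin m → ZMod 2) × (Fin m → ZMod 2) × (Fin m → ZMod 2) //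
        cword D E F a.1 a.2.1 a.2.2 = 0} = 2) ∧
    (¬ (D.card = m - 1 ∧ E.card = m - 1) →
      {a : (Fin m → ZMod 2) × (Fin m → ZMod 2) × (Fin m → ZMod 2) |
        cword D E F a.1 a.2.1 a.2.2 = 0} = {(0, 0, 0)}) := by
  have compl_nonempty : ∀ S : Finset (Fin m), S.card ≤ m - 1 → Sᶜ.Nonempty := fun S hS =>
    Finset.card_pos.1 (by rw [card_compl_fin]; omega)
  have hker := setOf_cword_eq_zero (compl_nonempty D hD) (compl_nonempty E hE) (compl_nonempty F hF)
  constructor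
  · rintro ⟨hD₁, hE₁⟩
    obtain ⟨j, hj⟩ := Finset.card_eq_one.1 (by rw [card_compl_fin]; omega : Dᶜ.card = 1)
    obtain ⟨k, hk⟩ := Finset.card_eq_one.1 (by rw [card_compl_fin]; omega : Eᶜ.card = 1)
    rw [← Set.coe_ofPred, Nat.card_coe_set_eq, hker, ipLevel_one_of_compl_eq_singleton hj,
      ipLevel_one_of_compl_eq_singleton hk, Set.singleton_prod_singleton,
      Set.singleton_prod_singleton, Set.singleton_union, Set.ncard_pair]
    simp [eq_comm]
  · intro hne
    rw [hker]
    rcases (by omega : D.card + 2 ≤ m ∨ E.card + 2 ≤ m) with h | h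
    · rw [ipLevel_one_eq_empty (S := D) (by rw [card_compl_fin]; omega), Set.empty_prod,
        Set.union_empty]
    · rw [ipLevel_one_eq_empty (S := E) (by rw [card_compl_fin]; omega), Set.prod_empty,
        Set.prod_empty, Set.union_empty]
end

section
/- With m ≥ 2 and D, E, F ⊆ [m] with |D|, |E|, |F| ≤ m−1, the code C_L = { c_a : a = (p, q+ur), p, q, r ∈ Z_2^m } has cardinality 2^(3m−1) if |D| = |E| = m−1, and cardinality 2^(3m) otherwise. -/
open Finset

-- helpers
lemma zmod2_eq_one {a : ZMod 2} (h : a ≠ 0) : a = 1 := by revert h; revert a; decide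

lemma ip_add_left {m : ℕ} (x y v : Fin m → ZMod 2) :
    ip (x + y) v = ip x v + ip y v := by
  simp [ip, add_mul, Finset.sum_add_distrib]

lemma ip_add_right {m : ℕ} (v x y : Fin m → ZMod 2) :
    ip v (x + y) = ip v x + ip v y := by
  simp [ip, mul_add, Finset.sum_add_distrib]

lemma ip_single_right {m : ℕ} (v : Fin m → ZMod 2) (j : Fin m) :
    ip v (Pi.single j 1) = v j := by
  simp [ip, Pi.single_apply]

lemma ip_single_left {m : ℕ} (v : Fin m → ZMod 2) (j : Fin m) :
    ip (Pi.single j 1) v = v j := by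
  simp [ip, Pi.single_apply]

lemma not_supp_subset {m : ℕ} {t : Fin m → ZMod 2} {S : Finset (Fin m)} {x : Fin m}
    (hx : x ∉ S) (ht : t x ≠ 0) : ¬ suppF t ⊆ S := fun hsub =>
  hx (hsub (by simp [suppF, ht]))

lemma exists_not_supp {m : ℕ} {t : Fin m → ZMod 2} {S : Finset (Fin m)}
    (h : ¬ suppF t ⊆ S) : ∃ x, x ∉ S ∧ t x ≠ 0 := by
  rcases Finset.not_subset.mp h with ⟨x, hx1, hx2⟩
  exact ⟨x, hx2, by simpa [suppF] using hx1⟩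

lemma exists_not_mem {m : ℕ} {S : Finset (Fin m)} (h : S.card < m) : ∃ j, j ∉ S := by
  by_contra hc
  push_neg at hc
  have : S = Finset.univ := Finset.eq_univ_iff_forall.mpr hc
  rw [this] at h
  simp at h

lemma ortho_zero {m : ℕ} {S : Finset (Fin m)} {j : Fin m} (hj : j ∉ S)
    {v : Fin m → ZMod 2} (h : ∀ t, ¬ suppF t ⊆ S → ip v t = 0) : v = 0 := by
  have hj' : v j = 0 := by
    have := h (Pi.single j 1) (not_supp_subset hj (by simp))
    rwa [ip_single_right] at this
  funext i
  by_cases hij : i = j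
  · subst hij; simpa using hj'
  · have hmem : ¬ suppF (Pi.single j 1 + Pi.single i 1) ⊆ S :=
      not_supp_subset hj (by simp [Pi.single_apply, Ne.symm hij])
    have := h _ hmem
    rw [ip_add_right, ip_single_right, ip_single_right, hj'] at this
    simpa using this

lemma ortho_const {m : ℕ} {S : Finset (Fin m)} {j : Fin m} (hj : j ∉ S)
    {v : Fin m → ZMod 2} {c : ZMod 2} (h : ∀ t, ¬ suppF t ⊆ S → ip v t = c) :
    (v j = c ∧ ∀ i, i ≠ j → v i = 0) := by
  have hj' : v j = c := by
    have := h (Pi.single j 1) (not_supp_subset hj (by simp))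
    rwa [ip_single_right] at this
  refine ⟨hj', fun i hij => ?_⟩
  have hmem : ¬ suppF (Pi.single j 1 + Pi.single i 1) ⊆ S :=
    not_supp_subset hj (by simp [Pi.single_apply, Ne.symm hij])
  have := h _ hmem
  rw [ip_add_right, ip_single_right, ip_single_right, hj'] at this
  exact add_eq_left.mp this

noncomputable def fhom (m : ℕ) (D E F : Finset (Fin m)) :
    ((Fin m → ZMod 2) × (Fin m → ZMod 2) × (Fin m → ZMod 2)) →+ (↥(Lset m D E F) → R2) where
  toFun a := cword D E F a.1 a.2.1 a.2.2
  map_zero' := by funext l; simp [cword, ip]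
  map_add' a b := by
    funext l
    simp only [cword, Prod.fst_add, Prod.snd_add, ip_add_left, Pi.add_apply,
      TrivSqZeroExt.inl_add, TrivSqZeroExt.inr_add]
    ring

lemma CL_eq_range (m : ℕ) (D E F : Finset (Fin m)) :
    CL m D E F = Set.range (fhom m D E F) := by
  ext c
  constructor
  · rintro ⟨p, q, r, rfl⟩; exact ⟨(p, q, r), rfl⟩
  · rintro ⟨⟨p, q, r⟩, rfl⟩; exact ⟨p, q, r, rfl⟩

lemma mem_L {m : ℕ} {D E F : Finset (Fin m)} {t₁ t₂ t₃ : Fin m → ZMod 2}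
    (h1 : ¬ suppF t₁ ⊆ D) (h2 : ¬ suppF t₂ ⊆ E) (h3 : ¬ suppF t₃ ⊆ F) :
    (t₁, t₂, t₃) ∈ Lset m D E F := by
  simp [Lset, h1, h2, h3]

lemma ker_cond {m : ℕ} {D E F : Finset (Fin m)} {p q r : Fin m → ZMod 2}
    (h : cword D E F p q r = 0) {t₁ t₂ t₃ : Fin m → ZMod 2}
    (h1 : ¬ suppF t₁ ⊆ D) (h2 : ¬ suppF t₂ ⊆ E) (h3 : ¬ suppF t₃ ⊆ F) :
    ip q t₂ = 0 ∧ ip p t₁ + ip q t₃ + ip r t₂ = 0 := by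
  have := congrFun h ⟨(t₁, t₂, t₃), mem_L h1 h2 h3⟩
  simp only [cword, Pi.zero_apply] at this
  constructor
  · have := congrArg TrivSqZeroExt.fst this
    simpa using this
  · have := congrArg TrivSqZeroExt.snd this
    simpa using this

lemma card_G (m : ℕ) :
    Nat.card ((Fin m → ZMod 2) × (Fin m → ZMod 2) × (Fin m → ZMod 2)) = 2 ^ (3 * m) := by
  simp [Nat.card_eq_fintype_card]
  rw [show 3 * m = m + (m + m) by ring, pow_add, pow_add]

lemma ip_zero_left {m : ℕ} (v : Fin m → ZMod 2) : ip 0 v = 0 := by simp [ip]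

lemma ker_step {m : ℕ} {D E F : Finset (Fin m)} {p q r : Fin m → ZMod 2}
    (hD : ∃ j, j ∉ D) (hE : ∃ k, k ∉ E) (hF : ∃ f, f ∉ F)
    (h : cword D E F p q r = 0) :
    q = 0 ∧ ∀ t₁ t₂, ¬ suppF t₁ ⊆ D → ¬ suppF t₂ ⊆ E → ip p t₁ + ip r t₂ = 0 := by
  obtain ⟨j, hj⟩ := hD
  obtain ⟨f, hf⟩ := hF
  have hjD : ¬ suppF (Pi.single j 1) ⊆ D := not_supp_subset hj (by simp)
  have hfF : ¬ suppF (Pi.single f 1) ⊆ F := not_supp_subset hf (by simp)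
  have hq : q = 0 := by
    apply ortho_zero hE.choose_spec
    intro t ht
    exact (ker_cond h hjD ht hfF).1
  refine ⟨hq, fun t₁ t₂ h1 h2 => ?_⟩
  have := (ker_cond h h1 h2 hfF).2
  rwa [hq, ip_zero_left, add_zero] at this

lemma zmod2_cases (a : ZMod 2) : a = 0 ∨ a = 1 := by revert a; decide

lemma ker_zero {m : ℕ} {D E F : Finset (Fin m)} {p q r : Fin m → ZMod 2}
    (hm : 2 ≤ m) (hD : D.card ≤ m - 1) (hE : E.card ≤ m - 1) (hF : F.card ≤ m - 1)
    (hcase : D.card ≤ m - 2 ∨ E.card ≤ m - 2)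
    (h : cword D E F p q r = 0) : p = 0 ∧ q = 0 ∧ r = 0 := by
  have hDlt : D.card < m := by omega
  have hElt : E.card < m := by omega
  have hFlt : F.card < m := by omega
  obtain ⟨hq, hpr⟩ := ker_step (exists_not_mem hDlt) (exists_not_mem hElt)
    (exists_not_mem hFlt) h
  obtain ⟨j, hj⟩ := exists_not_mem hDlt
  obtain ⟨k, hk⟩ := exists_not_mem hElt
  have hjD : ¬ suppF (Pi.single j 1) ⊆ D := not_supp_subset hj (by simp)
  have hkE : ¬ suppF (Pi.single k 1) ⊆ E := not_supp_subset hk (by simp)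
  rcases hcase with hc | hc
  · -- two distinct elements outside D
    have h2 : 1 < Dᶜ.card := by
      rw [Finset.card_compl]
      simp only [Fintype.card_fin]
      omega
    obtain ⟨a, ha, b, hb, hab⟩ := Finset.one_lt_card.mp h2
    rw [Finset.mem_compl] at ha hb
    set c := ip r (Pi.single k 1) with hcdef
    have hpc : ∀ t, ¬ suppF t ⊆ D → ip p t = c := by
      intro t ht
      have h0 := hpr t (Pi.single k 1) ht hkE
      have h1 := neg_eq_of_add_eq_zero_right h0
      rw [hcdef, ← h1, CharTwo.neg_eq]
    obtain ⟨hpa, hpa'⟩ := ortho_const ha hpc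
    obtain ⟨hpb, hpb'⟩ := ortho_const hb hpc
    have hc0 : c = 0 := by rw [← hpb]; exact hpa' b (Ne.symm hab)
    have hp : p = 0 := by
      funext i
      by_cases hia : i = a
      · subst hia; simp [hpa, hc0]
      · simp [hpa' i hia]
    have hr : r = 0 := by
      apply ortho_zero hk
      intro t ht
      have := hpr (Pi.single j 1) t hjD ht
      rwa [hp, ip_zero_left, zero_add] at this
    exact ⟨hp, hq, hr⟩
  · -- two distinct elements outside E
    have h2 : 1 < Eᶜ.card := by
      rw [Finset.card_compl]
      simp only [Fintype.card_fin]
      omega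
    obtain ⟨a, ha, b, hb, hab⟩ := Finset.one_lt_card.mp h2
    rw [Finset.mem_compl] at ha hb
    set c := ip p (Pi.single j 1) with hcdef
    have hrc : ∀ t, ¬ suppF t ⊆ E → ip r t = c := by
      intro t ht
      have h0 := hpr (Pi.single j 1) t hjD ht
      have h1 := neg_eq_of_add_eq_zero_left h0
      rw [hcdef, ← h1, CharTwo.neg_eq]
    obtain ⟨hra, hra'⟩ := ortho_const ha hrc
    obtain ⟨hrb, hrb'⟩ := ortho_const hb hrc
    have hc0 : c = 0 := by rw [← hrb]; exact hra' b (Ne.symm hab)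
    have hr : r = 0 := by
      funext i
      by_cases hia : i = a
      · subst hia; simp [hra, hc0]
      · simp [hra' i hia]
    have hp : p = 0 := by
      apply ortho_zero hj
      intro t ht
      have := hpr t (Pi.single k 1) ht hkE
      rwa [hr, ip_zero_left, add_zero] at this
    exact ⟨hp, hq, hr⟩

lemma ker_case1 {m : ℕ} {D E F : Finset (Fin m)} {j k : Fin m}
    (hF : F.card < m) (hjc : Dᶜ = {j}) (hkc : Eᶜ = {k}) (p q r : Fin m → ZMod 2) :
    cword D E F p q r = 0 ↔
      ((p, q, r) = (0, 0, 0) ∨ (p, q, r) = (Pi.single j 1, 0, Pi.single k 1)) := by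
  have hj : j ∉ D := by rw [← Finset.mem_compl, hjc]; simp
  have hk : k ∉ E := by rw [← Finset.mem_compl, hkc]; simp
  have hjD : ¬ suppF (Pi.single j 1) ⊆ D := not_supp_subset hj (by simp)
  have hkE : ¬ suppF (Pi.single k 1) ⊆ E := not_supp_subset hk (by simp)
  have honeD : ∀ t : Fin m → ZMod 2, ¬ suppF t ⊆ D → t j = 1 := by
    intro t ht
    obtain ⟨x, hx, hx'⟩ := exists_not_supp ht
    have : x = j := by
      have : x ∈ Dᶜ := Finset.mem_compl.mpr hx
      rwa [hjc, Finset.mem_singleton] at this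
    exact this ▸ zmod2_eq_one hx'
  have honeE : ∀ t : Fin m → ZMod 2, ¬ suppF t ⊆ E → t k = 1 := by
    intro t ht
    obtain ⟨x, hx, hx'⟩ := exists_not_supp ht
    have : x = k := by
      have : x ∈ Eᶜ := Finset.mem_compl.mpr hx
      rwa [hkc, Finset.mem_singleton] at this
    exact this ▸ zmod2_eq_one hx'
  constructor
  · intro h
    obtain ⟨hq, hpr⟩ := ker_step ⟨j, hj⟩ ⟨k, hk⟩ (exists_not_mem hF) h
    set c := ip r (Pi.single k 1) with hcdef
    have hpc : ∀ t, ¬ suppF t ⊆ D → ip p t = c := by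
      intro t ht
      have h0 := hpr t (Pi.single k 1) ht hkE
      have h1 := neg_eq_of_add_eq_zero_right h0
      rw [hcdef, ← h1, CharTwo.neg_eq]
    obtain ⟨hpj, hpj'⟩ := ortho_const hj hpc
    have hrc : ∀ t, ¬ suppF t ⊆ E → ip r t = c := by
      intro t ht
      have h0 := hpr (Pi.single j 1) t hjD ht
      have h1 := neg_eq_of_add_eq_zero_left h0
      rw [hpc _ hjD] at h1
      rw [← h1, CharTwo.neg_eq]
    obtain ⟨hrk, hrk'⟩ := ortho_const hk hrc
    rcases zmod2_cases c with hc | hc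
    · left
      have hp : p = 0 := by
        funext i
        by_cases hij : i = j
        · subst hij; simp [hpj, hc]
        · simp [hpj' i hij]
      have hr : r = 0 := by
        funext i
        by_cases hik : i = k
        · subst hik; simp [hrk, hc]
        · simp [hrk' i hik]
      rw [hp, hq, hr]
    · right
      have hp : p = Pi.single j 1 := by
        funext i
        by_cases hij : i = j
        · subst hij; simp [hpj, hc, Pi.single_apply]
        · simp [hpj' i hij, Pi.single_apply, hij]
      have hr : r = Pi.single k 1 := by
        funext i
        by_cases hik : i = k
        · subst hik; simp [hrk, hc, Pi.single_apply]
        · simp [hrk' i hik, Pi.single_apply, hik]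
      rw [hp, hq, hr]
  · rintro (h | h) <;> simp only [Prod.mk.injEq] at h <;> obtain ⟨hp, hq, hr⟩ := h
    · subst hp hq hr
      funext l
      simp [cword, ip]
    · subst hp hq hr
      funext l
      obtain ⟨⟨t₁, t₂, t₃⟩, hl⟩ := l
      simp only [Lset, Finset.mem_filter, Finset.mem_univ, true_and] at hl
      obtain ⟨h1, h2, h3⟩ := hl
      have e1 : ip (Pi.single j 1) t₁ = 1 := by rw [ip_single_left, honeD t₁ h1]
      have e2 : ip (Pi.single k 1) t₂ = 1 := by rw [ip_single_left, honeE t₂ h2]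
      have hz : (1 + (0 : ZMod 2) + 1) = 0 := by decide
      simp [cword, e1, e2, ip_zero_left, hz]
      exact Or.inl (by decide)

/-- |C_L| = 2^(3m−1) if |D| = |E| = m−1, and |C_L| = 2^(3m) otherwise. -/
theorem stmt10 (m : ℕ) (hm : 2 ≤ m) (D E F : Finset (Fin m))
    (hD : D.card ≤ m - 1) (hE : E.card ≤ m - 1) (hF : F.card ≤ m - 1) :
    ((D.card = m - 1 ∧ E.card = m - 1) → Nat.card (CL m D E F) = 2 ^ (3 * m - 1)) ∧
    (¬ (D.card = m - 1 ∧ E.card = m - 1) → Nat.card (CL m D E F) = 2 ^ (3 * m)) := by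
  have hF' : F.card < m := by omega
  rw [CL_eq_range]
  set f := fhom m D E F with hf
  constructor
  · rintro ⟨hD1, hE1⟩
    obtain ⟨j, hjc⟩ := Finset.card_eq_one.mp
      (show Dᶜ.card = 1 by rw [Finset.card_compl]; simp only [Fintype.card_fin]; omega)
    obtain ⟨k, hkc⟩ := Finset.card_eq_one.mp
      (show Eᶜ.card = 1 by rw [Finset.card_compl]; simp only [Fintype.card_fin]; omega)
    have hker : (f.ker : Set _) =
        {((0 : Fin m → ZMod 2), (0 : Fin m → ZMod 2), (0 : Fin m → ZMod 2)),
          (Pi.single j 1, 0, Pi.single k 1)} := by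
      ext ⟨p, q, r⟩
      simp only [SetLike.mem_coe, AddMonoidHom.mem_ker, Set.mem_insert_iff,
        Set.mem_singleton_iff, hf, fhom, AddMonoidHom.coe_mk, ZeroHom.coe_mk]
      exact ker_case1 hF' hjc hkc p q r
    have hne : ((0 : Fin m → ZMod 2), (0 : Fin m → ZMod 2), (0 : Fin m → ZMod 2)) ≠
        (Pi.single j 1, (0 : Fin m → ZMod 2), Pi.single k 1) := by
      intro h
      have := congrFun (congrArg Prod.fst h) j
      simp at this
    have hkcard : Nat.card f.ker = 2 := by
      rw [← SetLike.coe_sort_coe, hker, Nat.card_coe_set_eq, Set.ncard_pair hne]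
    have lag := AddSubgroup.card_eq_card_quotient_mul_card_addSubgroup f.ker
    rw [card_G, hkcard] at lag
    have hq : Nat.card (Set.range ⇑f) = Nat.card (_ ⧸ f.ker) := by
      rw [← AddMonoidHom.coe_range, SetLike.coe_sort_coe]
      exact (Nat.card_congr (QuotientAddGroup.quotientKerEquivRange f).toEquiv).symm
    rw [hq]
    have h3 : 2 ^ (3 * m) = 2 ^ (3 * m - 1) * 2 := by
      rw [← pow_succ]; congr 1; omega
    rw [h3] at lag
    exact (Nat.eq_of_mul_eq_mul_right (by norm_num) lag.symm)
  · intro hnot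
    have hcase : D.card ≤ m - 2 ∨ E.card ≤ m - 2 := by
      rcases Nat.eq_or_lt_of_le hD with h | h
      · right
        have : E.card ≠ m - 1 := fun hE1 => hnot ⟨h, hE1⟩
        omega
      · left; omega
    have hinj : Function.Injective ⇑f := by
      rw [injective_iff_map_eq_zero]
      rintro ⟨p, q, r⟩ ha
      have ha' : cword D E F p q r = 0 := ha
      obtain ⟨hp, hq, hr⟩ := ker_zero hm hD hE hF hcase ha'
      simp [hp, hq, hr, Prod.ext_iff]
    rw [Nat.card_congr (Equiv.ofInjective _ hinj).symm, card_G]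
end

section
/- With m ≥ 2 and D, E, F ⊆ [m] with |D|, |E|, |F| ≤ m−1, write d = 2^|D|, e = 2^|E|, g = 2^|F|, M = 2^m, and |L| = (M−d)(M−e)(M−g). Then the Lee weight of every codeword c_a of C_L lies in the set { 0, |L|, |L| + (M−d)e(M−g), |L| + (M−d)(M−e)g/2, |L| + (M−d)(M−e)g/2 − (M−d)eg/2, |L| − (M−d)eg/2, |L| − (M−d)eg, |L| + d(M−e)(M−g), |L| − de(M−g), |L| − d(M−e)g/2, |L| − d(M−e)g/2 + deg/2, |L| + deg/2, |L| + deg }; in particular C_L is a few-Lee weight code with at most 12 distinct nonzero Lee weights. -/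
open Finset

/-!
Since the Hamming weight of `b : ZMod 2` is `(1 - (-1)^b) / 2`, the Lee weight of `c_a` is `|L|`
minus half the sum of two character sums over `L`, one per Gray coordinate; in them `t₂` is
paired with `r` and with `q + r` respectively.
As `L = Δ_D^c × Δ_E^c × Δ_F^c`, each character sum factors, and a sum of `(-1)^⟨v,t⟩` over `Δ_S^c`
equals `2^m [v = 0] - 2^|S| [v vanishes on S]`, so it takes only the values `2^m - 2^|S|`, `-2^|S|`
and `0`. The weight is therefore `|L| - X (Y(r) + Y(q + r)) Z / 2` with each factor in such a
three-element set; when `q ≠ 0` at most one of `r`, `q + r` vanishes, and listing the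
remaining cases gives the thirteen values.
-/

def signChar : AddChar (ZMod 2) ℚ := AddChar.zmodChar 2 (by norm_num : (-1 : ℚ) ^ 2 = 1)

lemma signChar_one : signChar 1 = -1 := by
  simp [signChar, AddChar.zmodChar_apply, ZMod.val_one]

lemma zmod_two_eq_zero_or_one (b : ZMod 2) : b = 0 ∨ b = 1 := by
  revert b; decide

lemma signChar_sum {ι : Type*} (s : Finset ι) (f : ι → ZMod 2) :
    signChar (∑ i ∈ s, f i) = ∏ i ∈ s, signChar (f i) := by
  classical
  induction s using Finset.induction_on with
  | empty => simp
  | insert a s ha ih => rw [sum_insert ha, prod_insert ha, AddChar.map_add_eq_mul, ih]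

lemma sum_signChar_mul (b : ZMod 2) : ∑ x, signChar (b * x) = if b = 0 then 2 else 0 := by
  have huniv : (univ : Finset (ZMod 2)) = {0, 1} := rfl
  rcases zmod_two_eq_zero_or_one b with rfl | rfl <;> simp [huniv, signChar_one]

lemma leeWtOne_eq (x : R2) :
    (leeWtOne x : ℚ) = 1 - (signChar (TrivSqZeroExt.snd x)
      + signChar (TrivSqZeroExt.fst x + TrivSqZeroExt.snd x)) / 2 := by
  unfold leeWtOne
  rcases zmod_two_eq_zero_or_one (TrivSqZeroExt.fst x) with h | h <;>
  rcases zmod_two_eq_zero_or_one (TrivSqZeroExt.snd x) with h' | h' <;>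
  norm_num [h, h', signChar_one, show (1 : ZMod 2) + 1 = 0 from rfl]

section Characters

variable {m : ℕ}

def supportedIn (S : Finset (Fin m)) : Finset (Fin m → ZMod 2) :=
  univ.filter fun t => suppF t ⊆ S

lemma supportedIn_eq_piFinset (S : Finset (Fin m)) :
    supportedIn S = Fintype.piFinset fun i => if i ∈ S then univ else {0} := by
  ext t
  simp only [supportedIn, suppF, mem_filter, mem_univ, true_and, Fintype.mem_piFinset,
    subset_iff]
  refine forall_congr' fun i => ?_
  split_ifs with hi <;> simp [hi]

lemma sum_supportedIn_signChar_ip (S : Finset (Fin m)) (v : Fin m → ZMod 2) :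
    ∑ t ∈ supportedIn S, signChar (ip v t) = if ∀ i ∈ S, v i = 0 then 2 ^ S.card else 0 := by
  calc ∑ t ∈ supportedIn S, signChar (ip v t)
      = ∏ i, ∑ b ∈ (if i ∈ S then (univ : Finset (ZMod 2)) else {0}), signChar (v i * b) := by
        simp only [ip, signChar_sum, supportedIn_eq_piFinset]
        exact (prod_univ_sum _ fun i b => signChar (v i * b)).symm
    _ = ∏ i, if i ∈ S then (if v i = 0 then 2 else 0) else 1 := by
        refine prod_congr rfl fun i _ => ?_
        split_ifs <;> simp [sum_signChar_mul, *]
    _ = if ∀ i ∈ S, v i = 0 then 2 ^ S.card else 0 := by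
        rw [prod_ite_mem univ S, univ_inter, prod_ite_zero, prod_const]
        congr

lemma sum_signChar_ip (v : Fin m → ZMod 2) :
    ∑ t, signChar (ip v t) = if v = 0 then 2 ^ m else 0 := by
  have h := sum_supportedIn_signChar_ip univ v
  rw [show supportedIn (univ : Finset (Fin m)) = univ by ext; simp [supportedIn]] at h
  simpa [funext_iff] using h

def charSumCompl (S : Finset (Fin m)) (v : Fin m → ZMod 2) : ℚ :=
  ∑ t ∈ (supportedIn S)ᶜ, signChar (ip v t)

lemma charSumCompl_eq (S : Finset (Fin m)) (v : Fin m → ZMod 2) :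
    charSumCompl S v =
      (if v = 0 then 2 ^ m else 0) - if ∀ i ∈ S, v i = 0 then 2 ^ S.card else 0 := by
  rw [← sum_signChar_ip, ← sum_supportedIn_signChar_ip, charSumCompl, eq_sub_iff_add_eq,
    sum_compl_add_sum]

lemma charSumCompl_zero (S : Finset (Fin m)) : charSumCompl S 0 = 2 ^ m - 2 ^ S.card := by
  simp [charSumCompl_eq]

lemma charSumCompl_of_ne_zero (S : Finset (Fin m)) {v : Fin m → ZMod 2} (hv : v ≠ 0) :
    charSumCompl S v ∈ ({-2 ^ S.card, 0} : Set ℚ) := by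
  rw [charSumCompl_eq, if_neg hv]
  split_ifs <;> simp

lemma charSumCompl_mem (S : Finset (Fin m)) (v : Fin m → ZMod 2) :
    charSumCompl S v ∈ ({2 ^ m - 2 ^ S.card, -2 ^ S.card, 0} : Set ℚ) := by
  by_cases hv : v = 0
  · simp [hv, charSumCompl_zero]
  · exact Set.mem_insert_of_mem _ (charSumCompl_of_ne_zero S hv)

lemma Lset_eq_product (D E F : Finset (Fin m)) :
    Lset m D E F = (supportedIn D)ᶜ ×ˢ (supportedIn E)ᶜ ×ˢ (supportedIn F)ᶜ := by
  ext; simp [Lset, supportedIn]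

lemma sum_Lset_signChar (D E F : Finset (Fin m)) (a b c : Fin m → ZMod 2) :
    ∑ l ∈ Lset m D E F, signChar (ip a l.1 + ip b l.2.1 + ip c l.2.2)
      = charSumCompl D a * charSumCompl E b * charSumCompl F c := by
  rw [Lset_eq_product, charSumCompl, charSumCompl, charSumCompl, mul_assoc, sum_mul_sum,
    sum_mul_sum]
  simp only [sum_product, AddChar.map_add_eq_mul, mul_sum, mul_assoc]

lemma card_Lset (D E F : Finset (Fin m)) :
    ((Lset m D E F).card : ℚ) =
      (2 ^ m - 2 ^ D.card) * (2 ^ m - 2 ^ E.card) * (2 ^ m - 2 ^ F.card) := by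
  simpa [ip, charSumCompl_zero] using sum_Lset_signChar D E F 0 0 0

end Characters

def leeWeights (d e g M Lc : ℚ) : Set ℚ :=
  {0, Lc,
    Lc + (M - d) * e * (M - g),
    Lc + (M - d) * (M - e) * g / 2,
    Lc + (M - d) * (M - e) * g / 2 - (M - d) * e * g / 2,
    Lc - (M - d) * e * g / 2,
    Lc - (M - d) * e * g,
    Lc + d * (M - e) * (M - g),
    Lc - d * e * (M - g),
    Lc - d * (M - e) * g / 2,
    Lc - d * (M - e) * g / 2 + d * e * g / 2,
    Lc + d * e * g / 2,
    Lc + d * e * g}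

section LeeWeights

variable {d e g M Lc X Y Z : ℚ}

lemma add_mem_of_mem_small {a b : ℚ} (ha : a ∈ ({-e, 0} : Set ℚ))
    (hb : b ∈ ({M - e, -e, 0} : Set ℚ)) :
    a + b ∈ ({M - 2 * e, M - e, -(2 * e), -e, 0} : Set ℚ) := by
  simp only [Set.mem_insert_iff, Set.mem_singleton_iff] at ha hb ⊢
  rcases ha with rfl | rfl <;> rcases hb with rfl | rfl | rfl <;> ring_nf <;> tauto

lemma mem_leeWeights_of_q_eq_zero (hL : Lc = (M - d) * (M - e) * (M - g))
    (hX : X ∈ ({M - d, -d, 0} : Set ℚ)) (hY : Y ∈ ({M - e, -e, 0} : Set ℚ)) :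
    Lc - X * (Y + Y) * (M - g) / 2 ∈ leeWeights d e g M Lc := by
  simp only [Set.mem_insert_iff, Set.mem_singleton_iff] at hX hY
  subst hL
  rcases hX with rfl | rfl | rfl <;> rcases hY with rfl | rfl | rfl <;>
    simp only [leeWeights, Set.mem_insert_iff, Set.mem_singleton_iff] <;> ring_nf <;> tauto

lemma mem_leeWeights_of_q_ne_zero (hL : Lc = (M - d) * (M - e) * (M - g))
    (hX : X ∈ ({M - d, -d, 0} : Set ℚ)) (hY : Y ∈ ({M - 2 * e, M - e, -(2 * e), -e, 0} : Set ℚ))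
    (hZ : Z ∈ ({-g, 0} : Set ℚ)) :
    Lc - X * Y * Z / 2 ∈ leeWeights d e g M Lc := by
  simp only [Set.mem_insert_iff, Set.mem_singleton_iff] at hX hY hZ
  subst hL
  rcases hX with rfl | rfl | rfl <;> rcases hY with rfl | rfl | rfl | rfl | rfl <;>
    rcases hZ with rfl | rfl <;>
    simp only [leeWeights, Set.mem_insert_iff, Set.mem_singleton_iff] <;> ring_nf <;> tauto

end LeeWeights

section Codewords

variable {m : ℕ} (D E F : Finset (Fin m)) (p q r : Fin m → ZMod 2)

lemma cword_snd (l : ↥(Lset m D E F)) :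
    TrivSqZeroExt.snd (cword D E F p q r l) = ip p l.1.1 + ip r l.1.2.1 + ip q l.1.2.2 := by
  simp only [cword, TrivSqZeroExt.snd_add, TrivSqZeroExt.snd_inl, TrivSqZeroExt.snd_inr, zero_add]
  ring

lemma cword_fst_add_snd (l : ↥(Lset m D E F)) :
    TrivSqZeroExt.fst (cword D E F p q r l) + TrivSqZeroExt.snd (cword D E F p q r l)
      = ip p l.1.1 + ip (q + r) l.1.2.1 + ip q l.1.2.2 := by
  simp only [cword, TrivSqZeroExt.fst_add, TrivSqZeroExt.fst_inl, TrivSqZeroExt.fst_inr,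
    TrivSqZeroExt.snd_add, TrivSqZeroExt.snd_inl, TrivSqZeroExt.snd_inr, zero_add, add_zero, ip,
    Pi.add_apply, add_mul, sum_add_distrib]
  ring

lemma leeWt_cword : (leeWt (cword D E F p q r) : ℚ) = (Lset m D E F).card
    - charSumCompl D p * (charSumCompl E r + charSumCompl E (q + r)) * charSumCompl F q / 2 := by
  calc (leeWt (cword D E F p q r) : ℚ)
      = ∑ l ∈ Lset m D E F, (1 - (signChar (ip p l.1 + ip r l.2.1 + ip q l.2.2)
          + signChar (ip p l.1 + ip (q + r) l.2.1 + ip q l.2.2)) / 2) := by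
        rw [leeWt, ← sum_coe_sort (Lset m D E F)]
        push_cast
        refine sum_congr rfl fun l _ => ?_
        rw [leeWtOne_eq, cword_fst_add_snd, cword_snd]
    _ = _ := by
        rw [sum_sub_distrib, ← sum_div, sum_add_distrib, sum_Lset_signChar, sum_Lset_signChar]
        simp only [sum_const, nsmul_eq_mul, mul_one]
        ring

lemma charSumCompl_add_mem (S : Finset (Fin m)) {q : Fin m → ZMod 2} (hq : q ≠ 0)
    (r : Fin m → ZMod 2) :
    charSumCompl S r + charSumCompl S (q + r) ∈ ({2 ^ m - 2 * 2 ^ S.card, 2 ^ m - 2 ^ S.card,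
      -(2 * 2 ^ S.card), -2 ^ S.card, 0} : Set ℚ) := by
  rcases eq_or_ne r 0 with rfl | hr
  · rw [add_zero, add_comm]
    exact add_mem_of_mem_small (charSumCompl_of_ne_zero S hq) (charSumCompl_mem S 0)
  · exact add_mem_of_mem_small (charSumCompl_of_ne_zero S hr) (charSumCompl_mem S (q + r))

end Codewords

theorem stmt11_general (m : ℕ) (D E F : Finset (Fin m))
    (d e g M Lc : ℚ)
    (hd : d = 2 ^ D.card) (he : e = 2 ^ E.card) (hg : g = 2 ^ F.card)
    (hM : M = 2 ^ m) (hL : Lc = (M - d) * (M - e) * (M - g)) :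
    ∀ p q r : Fin m → ZMod 2,
      (leeWt (cword D E F p q r) : ℚ) ∈
        ({0, Lc,
          Lc + (M - d) * e * (M - g),
          Lc + (M - d) * (M - e) * g / 2,
          Lc + (M - d) * (M - e) * g / 2 - (M - d) * e * g / 2,
          Lc - (M - d) * e * g / 2,
          Lc - (M - d) * e * g,
          Lc + d * (M - e) * (M - g),
          Lc - d * e * (M - g),
          Lc - d * (M - e) * g / 2,
          Lc - d * (M - e) * g / 2 + d * e * g / 2,
          Lc + d * e * g / 2,
          Lc + d * e * g} : Set ℚ) := by
  intro p q r
  subst hd he hg hM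
  rw [leeWt_cword, card_Lset, ← hL]
  have hX := charSumCompl_mem D p
  rcases eq_or_ne q 0 with rfl | hq
  · rw [zero_add, charSumCompl_zero]
    exact mem_leeWeights_of_q_eq_zero hL hX (charSumCompl_mem E r)
  · exact mem_leeWeights_of_q_ne_zero hL hX (charSumCompl_add_mem E hq r)
      (charSumCompl_of_ne_zero F hq)

/-- every codeword of C_L has Lee weight in the listed 13-element set,
where d = 2^|D|, e = 2^|E|, g = 2^|F|, M = 2^m and Lc = |L| = (M−d)(M−e)(M−g). -/
theorem stmt11 (m : ℕ) (hm : 2 ≤ m) (D E F : Finset (Fin m))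
    (hD : D.card ≤ m - 1) (hE : E.card ≤ m - 1) (hF : F.card ≤ m - 1)
    (d e g M Lc : ℚ)
    (hd : d = 2 ^ D.card) (he : e = 2 ^ E.card) (hg : g = 2 ^ F.card)
    (hM : M = 2 ^ m) (hL : Lc = (M - d) * (M - e) * (M - g)) :
    ∀ p q r : Fin m → ZMod 2,
      (leeWt (cword D E F p q r) : ℚ) ∈
        ({0, Lc,
          Lc + (M - d) * e * (M - g),
          Lc + (M - d) * (M - e) * g / 2,
          Lc + (M - d) * (M - e) * g / 2 - (M - d) * e * g / 2,
          Lc - (M - d) * e * g / 2,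
          Lc - (M - d) * e * g,
          Lc + d * (M - e) * (M - g),
          Lc - d * e * (M - g),
          Lc - d * (M - e) * g / 2,
          Lc - d * (M - e) * g / 2 + d * e * g / 2,
          Lc + d * e * g / 2,
          Lc + d * e * g} : Set ℚ) :=
  stmt11_general m D E F d e g M Lc hd he hg hM hL
end

section
/- Let m ≥ 2 and D, E, F ⊆ [m] with 1 ≤ |D|, |E|, |F| ≤ m−1. Then the Gray image Φ(C_L) ⊆ Z_2^(2|L|) is self-orthogonal with respect to the Euclidean inner product: for all codewords x, y ∈ Φ(C_L), Σ_i x_i y_i = 0 in Z_2. -/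
open Finset

lemma aux_card_even {m : ℕ} (S : Finset (Fin m)) (hS : S.Nonempty) :
    (((Finset.univ.filter fun t : Fin m → ZMod 2 => ¬ suppF t ⊆ S).card : ZMod 2)) = 0 := by
  classical
  obtain ⟨i, hi⟩ := hS
  set A := Finset.univ.filter fun t : Fin m → ZMod 2 => ¬ suppF t ⊆ S with hA
  have : ((A.card : ZMod 2)) = ∑ _t ∈ A, (1 : ZMod 2) := by
    simp [Finset.sum_const, nsmul_eq_mul]
  rw [this]
  have gmem : ∀ t ∈ A, Function.update t i (t i + 1) ∈ A := by
    intro t ht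
    simp only [hA, Finset.mem_filter, Finset.mem_univ, true_and] at ht ⊢
    intro h
    apply ht
    intro j hj
    simp only [suppF, Finset.mem_filter, Finset.mem_univ, true_and] at hj
    by_cases hji : j = i
    · exact hji ▸ hi
    · apply h
      simp only [suppF, Finset.mem_filter, Finset.mem_univ, true_and]
      rwa [Function.update_of_ne hji]
  refine Finset.sum_involution (fun t _ => Function.update t i (t i + 1)) ?_ ?_ gmem ?_
  · intro a ha
    decide
  · intro a ha h heq
    have h2 := congrFun heq i
    simp only [Function.update_self] at h2
    exact one_ne_zero (by linear_combination h2)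
  · intro a ha
    funext j
    by_cases hji : j = i
    · subst hji
      simp only [Function.update_self]
      rw [add_assoc, (show (1:ZMod 2)+1 = 0 from rfl), add_zero]
    · simp [Function.update_of_ne hji]

/-- for 1 ≤ |D|, |E|, |F| ≤ m−1, the Gray image Φ(C_L) is self-orthogonal
with respect to the Euclidean inner product. -/
theorem stmt14 (m : ℕ) (hm : 2 ≤ m) (D E F : Finset (Fin m))
    (hD1 : 1 ≤ D.card) (hD : D.card ≤ m - 1)
    (hE1 : 1 ≤ E.card) (hE : E.card ≤ m - 1)
    (hF1 : 1 ≤ F.card) (hF : F.card ≤ m - 1) :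
    ∀ p q r p' q' r' : Fin m → ZMod 2,
      ∑ i, gray (cword D E F p q r) i * gray (cword D E F p' q' r') i = 0 := by
  intro p q r p' q' r'
  classical
  set Ad := Finset.univ.filter fun t : Fin m → ZMod 2 => ¬ suppF t ⊆ D with hAd
  set Be := Finset.univ.filter fun t : Fin m → ZMod 2 => ¬ suppF t ⊆ E with hBe
  set Cf := Finset.univ.filter fun t : Fin m → ZMod 2 => ¬ suppF t ⊆ F with hCf
  have hL : Lset m D E F = Ad ×ˢ (Be ×ˢ Cf) := by
    ext t
    simp [Lset, Finset.mem_product, hAd, hBe, hCf, and_assoc]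
  rw [Fintype.sum_sum_type]
  simp only [gray, cword, Sum.elim_inl, Sum.elim_inr, TrivSqZeroExt.snd_add,
    TrivSqZeroExt.snd_inl, TrivSqZeroExt.snd_inr, TrivSqZeroExt.fst_add,
    TrivSqZeroExt.fst_inl, TrivSqZeroExt.fst_inr, zero_add, add_zero]
  rw [← Finset.sum_add_distrib, Finset.univ_eq_attach,
    Finset.sum_attach (Lset m D E F) (fun t =>
      (ip p t.1 + ip q t.2.2 + ip r t.2.1) * (ip p' t.1 + ip q' t.2.2 + ip r' t.2.1) +
        (ip q t.2.1 + (ip p t.1 + ip q t.2.2 + ip r t.2.1)) *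
          (ip q' t.2.1 + (ip p' t.1 + ip q' t.2.2 + ip r' t.2.1))), hL]
  simp only [Finset.sum_product]
  have htwo : (2 : ZMod 2) = 0 := rfl
  have hCf0 : ((Cf.card : ZMod 2)) = 0 :=
    aux_card_even F (Finset.card_pos.mp hF1)
  have hAd0 : ((Ad.card : ZMod 2)) = 0 :=
    aux_card_even D (Finset.card_pos.mp hD1)
  have key : ∀ t1 t2 : Fin m → ZMod 2,
      (∑ t3 ∈ Cf,
        ((ip p t1 + ip q t3 + ip r t2) * (ip p' t1 + ip q' t3 + ip r' t2) +
          (ip q t2 + (ip p t1 + ip q t3 + ip r t2)) *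
            (ip q' t2 + (ip p' t1 + ip q' t3 + ip r' t2))))
      = ∑ t3 ∈ Cf, (ip q t2 * ip q' t3 + ip q t3 * ip q' t2) := by
    intro t1 t2
    have e : ∀ t3 : Fin m → ZMod 2,
        ((ip p t1 + ip q t3 + ip r t2) * (ip p' t1 + ip q' t3 + ip r' t2) +
          (ip q t2 + (ip p t1 + ip q t3 + ip r t2)) *
            (ip q' t2 + (ip p' t1 + ip q' t3 + ip r' t2)))
        = (ip q t2 * ip q' t2 + ip q t2 * ip p' t1 + ip q t2 * ip r' t2 +
            ip p t1 * ip q' t2 + ip r t2 * ip q' t2) +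
          (ip q t2 * ip q' t3 + ip q t3 * ip q' t2) := by
      intro t3
      linear_combination ((ip p t1 + ip q t3 + ip r t2) *
        (ip p' t1 + ip q' t3 + ip r' t2)) * htwo
    rw [Finset.sum_congr rfl (fun t3 _ => e t3), Finset.sum_add_distrib,
      Finset.sum_const, nsmul_eq_mul, hCf0, zero_mul, zero_add]
  rw [Finset.sum_congr rfl (fun t1 _ => Finset.sum_congr rfl (fun t2 _ => key t1 t2)),
    Finset.sum_const, nsmul_eq_mul, hAd0, zero_mul]
end

section
/- Let C be a binary linear code (a Z_2-linear subspace of Z_2^n) containing a nonzero codeword. Let w_0 be the minimum Hamming weight among nonzero codewords of C and w_∞ the maximum Hamming weight among codewords of C. If w_0 / w_∞ > 1/2 (equivalently 2·w_0 > w_∞), then C is minimal: for all nonzero c, c' ∈ C with supp(c') ⊆ supp(c), one has c' = c. -/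
/-- The Hamming weight of a binary word. -/
def hWt {n : ℕ} (c : Fin n → ZMod 2) : ℕ := (Finset.univ.filter fun i => c i ≠ 0).card

/-- Ashikhmin–Barg for p = 2: if C is a binary linear code with a nonzero
codeword, w₀ is its minimum nonzero Hamming weight, w∞ its maximum Hamming weight, and
2·w₀ > w∞, then C is minimal: any nonzero codeword c' whose support is contained in the
support of a nonzero codeword c equals c. -/
theorem stmt15 (n : ℕ) (C : Submodule (ZMod 2) (Fin n → ZMod 2))
    (w0 winf : ℕ)
    (hw0 : IsLeast {w : ℕ | ∃ c ∈ C, c ≠ 0 ∧ hWt c = w} w0)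
    (hwinf : IsGreatest {w : ℕ | ∃ c ∈ C, hWt c = w} winf)
    (h : winf < 2 * w0) :
    ∀ c ∈ C, ∀ c' ∈ C, c ≠ 0 → c' ≠ 0 →
      (∀ i, c' i ≠ 0 → c i ≠ 0) → c' = c := by
  intro c hc c' hc' hcne hc'ne hsupp
  by_contra hne
  have hdne : c + c' ≠ 0 := by
    intro h0
    apply hne
    funext i
    have := congrFun h0 i
    have key : ∀ a b : ZMod 2, a + b = 0 → b = a := by decide
    exact key _ _ this
  have hdmem : c + c' ∈ C := C.add_mem hc hc'
  -- support decomposition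
  have hsplit : hWt c = hWt c' + hWt (c + c') := by
    unfold hWt
    rw [← Finset.card_union_of_disjoint]
    · congr 1
      ext i
      simp only [Finset.mem_filter, Finset.mem_union, Finset.mem_univ, true_and,
        Pi.add_apply]
      have key : ∀ a b : ZMod 2, (b ≠ 0 → a ≠ 0) →
          (a ≠ 0 ↔ (b ≠ 0 ∨ a + b ≠ 0)) := by decide
      exact key _ _ (hsupp i)
    · rw [Finset.disjoint_filter]
      intro i _ hb hab
      have key : ∀ a b : ZMod 2, (b ≠ 0 → a ≠ 0) → b ≠ 0 → a + b ≠ 0 → False := by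
        decide
      exact key (c i) (c' i) (hsupp i) hb hab
  have h1 : w0 ≤ hWt c' := hw0.2 ⟨c', hc', hc'ne, rfl⟩
  have h2 : w0 ≤ hWt (c + c') := hw0.2 ⟨c + c', hdmem, hdne, rfl⟩
  have h3 : hWt c ≤ winf := hwinf.2 ⟨c, hc, rfl⟩
  omega
end

section
/- Let m ≥ 2 and D, E, F ⊆ [m] with |D| = |E| = |F| = n where 0 ≤ n ≤ m−2. Then the Gray image Φ(C_L) is a binary linear code of length 2(2^m − 2^n)^3, with exactly 2^(3m) codewords (dimension 3m over Z_2), and minimum nonzero Hamming weight (2^m − 2^n)·2^m·(2^m − 2^(n+1)); moreover, if n ≥ 1 then Φ(C_L) is self-orthogonal. -/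
/-
Write `χ(x) = (-1)^x` on `Z_2` and `σ_S(v) = ∑_{t ∈ Δ_S^c} χ⟨v,t⟩`. Since `Δ_S` is a coordinate
subspace, `σ_S(v) = 2^m [v = 0] - 2^|S| [v vanishes on S]`. The Gray image of `f + us` has weight
`(2 - χ(s) - χ(f + s)) / 2`, and `s`, `f + s` split into inner products against `t₁`, `t₂`, `t₃`
separately, so the weight of `Φ(c_a)` is `|L| - σ_D(p) σ_F(q) (σ_E(r) + σ_E(q + r)) / 2`.

With `k = 2^n` and `K = 2^m - 2^n`, every `σ` lies in `[-k, K]`, and in `[-k, 0]` away from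
`v = 0`. So either `p = q = 0`, and then `r ≠ 0` makes the second factor nonpositive, or
`σ_D(p) σ_F(q) ∈ [-kK, k²]`; a bilinear function on a box is maximised at a corner, which gives
weight `≥ K³ - k²K = K · 2^m · (2^m - 2^(n+1))`, attained at `p = e_i, q = 0, r = e_j`. This bound
is positive, so the encoder `(p, q, r) ↦ Φ(c_a)` is injective and there are `2^(3m)` codewords.

For self-orthogonality, the Gray inner product of two codewords is a sum over `L` of terms each
constant in `t₁` or in `t₃`, while `|Δ_D^c| = |Δ_F^c| = 2^m - 2^n` is even once `n ≥ 1`.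
-/

open Finset

/-- The Gray image Φ(C_L), a binary code of length 2|L|. -/
def grayImage (m : ℕ) (D E F : Finset (Fin m)) :
    Set (↥(Lset m D E F) ⊕ ↥(Lset m D E F) → ZMod 2) :=
  { x | ∃ p q r : Fin m → ZMod 2, x = gray (cword D E F p q r) }

/-- Hamming weight of a binary word. -/
def hWtG {ι : Type} [Fintype ι] (x : ι → ZMod 2) : ℕ := ∑ i, if x i ≠ 0 then 1 else 0

namespace GrayCode

variable {m : ℕ}

def chi (x : ZMod 2) : ℤ := 1 - 2 * x.val

lemma chi_add : ∀ x y : ZMod 2, chi (x + y) = chi x * chi y := by decide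

lemma chi_sum {ι : Type*} (s : Finset ι) (f : ι → ZMod 2) :
    chi (∑ i ∈ s, f i) = ∏ i ∈ s, chi (f i) := by
  induction s using Finset.cons_induction with
  | empty => rfl
  | cons a s ha ih => rw [sum_cons, prod_cons, chi_add, ih]

lemma sum_chi_mul : ∀ a : ZMod 2, ∑ x, chi (a * x) = if a = 0 then 2 else 0 := by decide

lemma ip_add_left (x y t : Fin m → ZMod 2) : ip (x + y) t = ip x t + ip y t := by
  simp only [ip, Pi.add_apply, add_mul, sum_add_distrib]

def delta (S : Finset (Fin m)) : Finset (Fin m → ZMod 2) := univ.filter fun t => suppF t ⊆ S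

def deltaCompl (S : Finset (Fin m)) : Finset (Fin m → ZMod 2) :=
  univ.filter fun t => ¬ suppF t ⊆ S

lemma deltaCompl_eq_sdiff (S : Finset (Fin m)) : deltaCompl S = univ \ delta S :=
  filter_not _ _

lemma delta_eq_piFinset (S : Finset (Fin m)) :
    delta S = Fintype.piFinset fun i => if i ∈ S then univ else {0} := by
  ext t
  simp only [delta, suppF, mem_filter, mem_univ, true_and, subset_iff, Fintype.mem_piFinset]
  refine forall_congr' fun i => ?_
  by_cases hi : i ∈ S <;> simp [hi]

lemma card_delta (S : Finset (Fin m)) : #(delta S) = 2 ^ #S := by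
  have hcoord (i : Fin m) : #(if i ∈ S then univ else {(0 : ZMod 2)}) = if i ∈ S then 2 else 1 := by
    split_ifs <;> rfl
  rw [delta_eq_piFinset, Fintype.card_piFinset]
  simp only [hcoord, prod_ite_mem, univ_inter, prod_const]

lemma card_deltaCompl (S : Finset (Fin m)) : #(deltaCompl S) = 2 ^ m - 2 ^ #S := by
  rw [deltaCompl_eq_sdiff, card_sdiff_of_subset (subset_univ _), card_delta, card_univ,
    Fintype.card_fun, ZMod.card, Fintype.card_fin]

lemma two_pow_card_le (S : Finset (Fin m)) : 2 ^ #S ≤ 2 ^ m :=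
  Nat.pow_le_pow_right two_pos ((card_le_univ S).trans (Fintype.card_fin m).le)

lemma natCast_card_deltaCompl (S : Finset (Fin m)) :
    (#(deltaCompl S) : ℤ) = 2 ^ m - 2 ^ #S := by
  rw [card_deltaCompl, Nat.cast_sub (two_pow_card_le S)]
  push_cast
  rfl

lemma sum_delta_chi_ip (S : Finset (Fin m)) (v : Fin m → ZMod 2) :
    ∑ t ∈ delta S, chi (ip v t) = if ∀ i ∈ S, v i = 0 then 2 ^ #S else 0 := by
  have hcoord (i : Fin m) : ∑ x ∈ (if i ∈ S then univ else {0}), chi (v i * x) =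
      if i ∈ S then (if v i = 0 then 2 else 0) else 1 := by
    by_cases hi : i ∈ S
    · simp only [hi, if_true, sum_chi_mul]
    · simp [hi, chi]
  simp only [ip, chi_sum, delta_eq_piFinset]
  rw [← prod_univ_sum (fun i => if i ∈ S then univ else {0}) fun i x => chi (v i * x)]
  simp only [hcoord, prod_ite_mem, univ_inter, prod_ite_zero, prod_const]

def charSum (S : Finset (Fin m)) (v : Fin m → ZMod 2) : ℤ :=
  ∑ t ∈ deltaCompl S, chi (ip v t)

lemma charSum_eq (S : Finset (Fin m)) (v : Fin m → ZMod 2) :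
    charSum S v = (if v = 0 then 2 ^ m else 0) - if ∀ i ∈ S, v i = 0 then 2 ^ #S else 0 := by
  have huniv : ∑ t, chi (ip v t) = if v = 0 then 2 ^ m else 0 := by
    have h := sum_delta_chi_ip univ v
    rw [delta, filter_true_of_mem fun t _ => subset_univ _, card_univ, Fintype.card_fin] at h
    simpa [funext_iff] using h
  rw [charSum, deltaCompl_eq_sdiff, sum_sdiff_eq_sub (subset_univ _), huniv, sum_delta_chi_ip]

lemma charSum_zero (S : Finset (Fin m)) : charSum S 0 = 2 ^ m - 2 ^ #S := by
  simp [charSum_eq]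

lemma charSum_single {S : Finset (Fin m)} {i : Fin m} (hi : i ∉ S) :
    charSum S (Pi.single i 1) = -2 ^ #S := by
  have hS : ∀ j ∈ S, (Pi.single i 1 : Fin m → ZMod 2) j = 0 :=
    fun j hj => Pi.single_eq_of_ne (ne_of_mem_of_not_mem hj hi) _
  rw [charSum_eq, if_neg (Pi.single_ne_zero_iff.mpr one_ne_zero), if_pos hS, zero_sub]

lemma charSum_nonpos (S : Finset (Fin m)) {v : Fin m → ZMod 2} (hv : v ≠ 0) : charSum S v ≤ 0 := by
  rw [charSum_eq, if_neg hv]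
  split_ifs <;> simp

lemma neg_two_pow_card_le_charSum (S : Finset (Fin m)) (v : Fin m → ZMod 2) :
    -2 ^ #S ≤ charSum S v := by
  have : (2 : ℤ) ^ #S ≤ 2 ^ m := by exact_mod_cast two_pow_card_le S
  rw [charSum_eq]
  split_ifs <;> linarith [pow_pos (two_pos : (0 : ℤ) < 2) #S]

lemma charSum_le (S : Finset (Fin m)) (v : Fin m → ZMod 2) : charSum S v ≤ 2 ^ m - 2 ^ #S := by
  obtain rfl | hv := eq_or_ne v 0
  · exact (charSum_zero S).le
  · have : (2 : ℤ) ^ #S ≤ 2 ^ m := by exact_mod_cast two_pow_card_le S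
    linarith [charSum_nonpos S hv]

lemma charSum_mem_Icc {n : ℕ} {S : Finset (Fin m)} (hS : #S = n) (v : Fin m → ZMod 2) :
    charSum S v ∈ Set.Icc (-2 ^ n) (2 ^ m - 2 ^ n) :=
  hS ▸ ⟨neg_two_pow_card_le_charSum S v, charSum_le S v⟩

lemma charSum_mem_Icc_of_ne_zero {n : ℕ} {S : Finset (Fin m)} (hS : #S = n)
    {v : Fin m → ZMod 2} (hv : v ≠ 0) : charSum S v ∈ Set.Icc (-2 ^ n) 0 :=
  hS ▸ ⟨neg_two_pow_card_le_charSum S v, charSum_nonpos S hv⟩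

lemma Lset_eq_product (D E F : Finset (Fin m)) :
    Lset m D E F = deltaCompl D ×ˢ deltaCompl E ×ˢ deltaCompl F := by
  ext ⟨t₁, t₂, t₃⟩
  simp [Lset, deltaCompl]

lemma card_Lset (D E F : Finset (Fin m)) :
    #(Lset m D E F) = (2 ^ m - 2 ^ #D) * (2 ^ m - 2 ^ #E) * (2 ^ m - 2 ^ #F) := by
  rw [Lset_eq_product, card_product, card_product, card_deltaCompl, card_deltaCompl,
    card_deltaCompl, mul_assoc]

lemma sum_Lset {M : Type*} [AddCommMonoid M] (D E F : Finset (Fin m))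
    (φ : (Fin m → ZMod 2) → (Fin m → ZMod 2) → (Fin m → ZMod 2) → M) :
    ∑ l : Lset m D E F, φ l.1.1 l.1.2.1 l.1.2.2 =
      ∑ t₁ ∈ deltaCompl D, ∑ t₂ ∈ deltaCompl E, ∑ t₃ ∈ deltaCompl F, φ t₁ t₂ t₃ := by
  rw [sum_coe_sort (Lset m D E F) fun t => φ t.1 t.2.1 t.2.2, Lset_eq_product, sum_product]
  exact sum_congr rfl fun t₁ _ => sum_product _ _ _

lemma sum_sum_sum_mul {α β γ R : Type*} [CommSemiring R] (A : Finset α) (B : Finset β)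
    (C : Finset γ) (f : α → R) (g : β → R) (h : γ → R) :
    ∑ a ∈ A, ∑ b ∈ B, ∑ c ∈ C, f a * g b * h c = (∑ a ∈ A, f a) * (∑ b ∈ B, g b) * ∑ c ∈ C, h c := by
  rw [sum_mul_sum, sum_mul_sum]
  simp only [sum_mul]
  exact sum_congr rfl fun _ _ => sum_comm

lemma hWtG_zero {ι : Type} [Fintype ι] : hWtG (0 : ι → ZMod 2) = 0 := by
  simp [hWtG]

lemma hWtG_gray {ι : Type} [Fintype ι] (c : ι → R2) : hWtG (gray c) = leeWt c := by
  rw [hWtG, Fintype.sum_sum_type, leeWt, ← sum_add_distrib]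
  rfl

lemma two_mul_leeWtOne (x : R2) :
    2 * (leeWtOne x : ℤ) = 2 - chi x.snd - chi (x.fst + x.snd) := by
  have key : ∀ f s : ZMod 2, 2 * (((if s ≠ 0 then 1 else 0) + if f + s ≠ 0 then 1 else 0 : ℕ) : ℤ) =
      2 - chi s - chi (f + s) := by decide
  exact key x.fst x.snd

section Bilinear

variable {α : Type*} [CommRing α] [LinearOrder α] [IsStrictOrderedRing α] {k K : α}

lemma mul_mem_Icc_of_mem_Icc_nonpos (hk : 0 ≤ k) (hK : 0 ≤ K) {a b : α}
    (ha : a ∈ Set.Icc (-k) 0) (hb : b ∈ Set.Icc (-k) K) : a * b ∈ Set.Icc (-(k * K)) (k ^ 2) := by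
  obtain ⟨ha₁, ha₂⟩ := ha
  obtain ⟨hb₁, hb₂⟩ := hb
  constructor
  · nlinarith [mul_nonneg (neg_nonneg.2 ha₂) (sub_nonneg.2 hb₂),
      mul_nonneg (neg_le_iff_add_nonneg.1 ha₁) hK]
  · nlinarith [mul_nonneg (neg_nonneg.2 ha₂) (neg_le_iff_add_nonneg.1 hb₁),
      mul_nonneg (neg_le_iff_add_nonneg.1 ha₁) hk]

lemma mul_le_of_mem_Icc (hk : 0 < k) (hK : 0 ≤ K) {P x : α} (hP : P ∈ Set.Icc (-(k * K)) (k ^ 2))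
    (hx : x ∈ Set.Icc (-(2 * k)) (2 * K)) : P * x ≤ 2 * k ^ 2 * K := by
  obtain ⟨hP₁, hP₂⟩ := hP
  obtain ⟨hx₁, hx₂⟩ := hx
  have h₁ : 0 ≤ K * ((k ^ 2 - P) * (x + 2 * k)) :=
    mul_nonneg hK (mul_nonneg (by linarith) (by linarith))
  have h₂ : 0 ≤ k * ((P + k * K) * (2 * K - x)) :=
    mul_nonneg hk.le (mul_nonneg (by linarith) (by linarith))
  -- `h₁ + h₂` is `(k + K) * (2 * k ^ 2 * K - P * x)`
  nlinarith

end Bilinear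

section Codeword

variable {D E F : Finset (Fin m)} {p q r : Fin m → ZMod 2}

@[simp] lemma cword_fst (l : Lset m D E F) : (cword D E F p q r l).fst = ip q l.1.2.1 := by
  simp [cword]

@[simp] lemma cword_snd (l : Lset m D E F) :
    (cword D E F p q r l).snd = ip p l.1.1 + ip q l.1.2.2 + ip r l.1.2.1 := by
  simp [cword]

lemma two_mul_hWtG_gray_cword :
    2 * (hWtG (gray (cword D E F p q r)) : ℤ) =
      2 * ((2 ^ m - 2 ^ #D) * (2 ^ m - 2 ^ #E) * (2 ^ m - 2 ^ #F))
        - charSum D p * charSum F q * (charSum E r + charSum E (q + r)) := by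
  have hL : 2 * ((2 ^ m - 2 ^ #D) * (2 ^ m - 2 ^ #E) * (2 ^ m - 2 ^ #F))
        - charSum D p * charSum F q * (charSum E r + charSum E (q + r)) =
      ∑ t₁ ∈ deltaCompl D, ∑ t₂ ∈ deltaCompl E, ∑ t₃ ∈ deltaCompl F,
        (2 - chi (ip p t₁) * chi (ip r t₂) * chi (ip q t₃)
          - chi (ip p t₁) * chi (ip (q + r) t₂) * chi (ip q t₃)) := by
    simp only [sum_sub_distrib, sum_const, nsmul_eq_mul, sum_sum_sum_mul, charSum,
      natCast_card_deltaCompl]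
    ring
  rw [hWtG_gray, leeWt, Nat.cast_sum, mul_sum, hL, ← sum_Lset]
  refine sum_congr rfl fun l _ => ?_
  rw [two_mul_leeWtOne, cword_fst, cword_snd, ip_add_left,
    show ip q l.1.2.1 + (ip p l.1.1 + ip q l.1.2.2 + ip r l.1.2.1) =
      ip p l.1.1 + (ip q l.1.2.1 + ip r l.1.2.1) + ip q l.1.2.2 by ring]
  simp only [chi_add]
  ring

end Codeword

def minWeight (m n : ℕ) : ℕ := (2 ^ m - 2 ^ n) * 2 ^ m * (2 ^ m - 2 ^ (n + 1))

lemma minWeight_pos {n : ℕ} (h : n + 2 ≤ m) : 0 < minWeight m n :=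
  Nat.mul_pos (Nat.mul_pos (Nat.sub_pos_of_lt (Nat.pow_lt_pow_right one_lt_two (by omega)))
    (by positivity)) (Nat.sub_pos_of_lt (Nat.pow_lt_pow_right one_lt_two (by omega)))

lemma two_mul_minWeight {n : ℕ} (h : n + 1 ≤ m) :
    2 * (minWeight m n : ℤ) = 2 * (2 ^ m - 2 ^ n) ^ 3 - 2 * (2 ^ n) ^ 2 * (2 ^ m - 2 ^ n) := by
  rw [minWeight, Nat.cast_mul, Nat.cast_mul,
    Nat.cast_sub (Nat.pow_le_pow_right two_pos (by omega)),
    Nat.cast_sub (Nat.pow_le_pow_right two_pos h)]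
  push_cast
  ring

def encode (D E F : Finset (Fin m)) :
    (Fin m → ZMod 2) × (Fin m → ZMod 2) × (Fin m → ZMod 2) →+
      (Lset m D E F ⊕ Lset m D E F → ZMod 2) where
  toFun v := gray (cword D E F v.1 v.2.1 v.2.2)
  map_zero' := by
    ext (l | l) <;> simp [gray, ip]
  map_add' v w := by
    ext (l | l) <;>
      simp only [gray, Sum.elim_inl, Sum.elim_inr, Pi.add_apply, cword_fst, cword_snd,
        Prod.fst_add, Prod.snd_add, ip_add_left] <;> ring

lemma grayImage_eq_range (D E F : Finset (Fin m)) :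
    grayImage m D E F = Set.range (encode D E F) := by
  ext x
  constructor
  · rintro ⟨p, q, r, rfl⟩
    exact ⟨(p, q, r), rfl⟩
  · rintro ⟨⟨p, q, r⟩, rfl⟩
    exact ⟨p, q, r, rfl⟩

section Weight

variable {n : ℕ} {D E F : Finset (Fin m)} (hD : #D = n) (hE : #E = n) (hF : #F = n)
include hD hE hF

lemma charSum_mul_charSum_mul_add_le (hnm : n ≤ m) {p q r : Fin m → ZMod 2}
    (hv : (p, q, r) ≠ 0) :
    charSum D p * charSum F q * (charSum E r + charSum E (q + r)) ≤
      2 * (2 ^ n) ^ 2 * (2 ^ m - 2 ^ n) := by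
  have hk : (0 : ℤ) < 2 ^ n := by positivity
  have hK : (0 : ℤ) ≤ 2 ^ m - 2 ^ n := sub_nonneg.2 (pow_le_pow_right₀ one_le_two hnm)
  by_cases hpq : p = 0 ∧ q = 0
  · obtain ⟨rfl, rfl⟩ := hpq
    have hr : r ≠ 0 := fun hr => hv (by simp [hr])
    rw [charSum_zero, charSum_zero, zero_add, hD, hF]
    nlinarith [charSum_nonpos E hr]
  have hx : charSum E r + charSum E (q + r) ∈ Set.Icc (-(2 * 2 ^ n)) (2 * (2 ^ m - 2 ^ n)) := by
    obtain ⟨h₁, h₂⟩ := charSum_mem_Icc hE r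
    obtain ⟨h₃, h₄⟩ := charSum_mem_Icc hE (q + r)
    constructor <;> linarith
  refine mul_le_of_mem_Icc hk hK ?_ hx
  rcases not_and_or.1 hpq with hp | hq
  · exact mul_mem_Icc_of_mem_Icc_nonpos hk.le hK (charSum_mem_Icc_of_ne_zero hD hp)
      (charSum_mem_Icc hF q)
  · rw [mul_comm (charSum D p)]
    exact mul_mem_Icc_of_mem_Icc_nonpos hk.le hK (charSum_mem_Icc_of_ne_zero hF hq)
      (charSum_mem_Icc hD p)

lemma minWeight_le_hWtG_encode (hnm : n + 1 ≤ m) {v} (hv : v ≠ 0) :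
    minWeight m n ≤ hWtG (encode D E F v) := by
  obtain ⟨p, q, r⟩ := v
  have key := charSum_mul_charSum_mul_add_le hD hE hF (by omega) hv
  have hwt := two_mul_hWtG_gray_cword (D := D) (E := E) (F := F) (p := p) (q := q) (r := r)
  rw [hD, hE, hF] at hwt
  have hmin := two_mul_minWeight hnm
  have : (minWeight m n : ℤ) ≤ hWtG (encode D E F (p, q, r)) := by
    change _ ≤ (hWtG (gray (cword D E F p q r)) : ℤ)
    nlinarith
  exact_mod_cast this

lemma hWtG_encode_single (hnm : n + 1 ≤ m) {i j : Fin m} (hi : i ∉ D) (hj : j ∉ E) :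
    hWtG (encode D E F (Pi.single i 1, 0, Pi.single j 1)) = minWeight m n := by
  have hwt := two_mul_hWtG_gray_cword (D := D) (E := E) (F := F) (p := Pi.single i 1) (q := 0)
    (r := Pi.single j 1)
  rw [zero_add, charSum_single hi, charSum_single hj, charSum_zero, hD, hE, hF] at hwt
  have : 2 * (hWtG (encode D E F (Pi.single i 1, 0, Pi.single j 1)) : ℤ) = 2 * minWeight m n := by
    rw [two_mul_minWeight hnm]
    exact hwt.trans (by ring)
  exact_mod_cast mul_left_cancel₀ two_ne_zero this

lemma encode_injective (hnm : n + 2 ≤ m) : Function.Injective (encode D E F) := by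
  refine (injective_iff_map_eq_zero _).2 fun v hv => ?_
  by_contra hne
  have := minWeight_le_hWtG_encode hD hE hF (by omega) hne
  rw [hv, hWtG_zero] at this
  exact (minWeight_pos hnm).ne' (Nat.le_zero.1 this)

lemma natCard_grayImage (hnm : n + 2 ≤ m) : Nat.card (grayImage m D E F) = 2 ^ (3 * m) := by
  rw [grayImage_eq_range, Nat.card_range_of_injective (encode_injective hD hE hF hnm),
    Nat.card_eq_fintype_card, Fintype.card_prod, Fintype.card_prod, Fintype.card_fun, ZMod.card,
    Fintype.card_fin]
  ring

lemma isLeast_hWtG_grayImage (hnm : n + 2 ≤ m) :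
    IsLeast {w : ℕ | ∃ x ∈ grayImage m D E F, x ≠ 0 ∧ hWtG x = w} (minWeight m n) := by
  have hlt (S : Finset (Fin m)) (hS : #S = n) : #S < #(univ : Finset (Fin m)) := by
    rw [card_univ, Fintype.card_fin]; omega
  obtain ⟨i, -, hi⟩ := exists_mem_notMem_of_card_lt_card (hlt D hD)
  obtain ⟨j, -, hj⟩ := exists_mem_notMem_of_card_lt_card (hlt E hE)
  have hwt := hWtG_encode_single hD hE hF (F := F) (by omega) hi hj
  refine ⟨⟨_, (grayImage_eq_range D E F).symm ▸ Set.mem_range_self _, fun h0 => ?_, hwt⟩, ?_⟩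
  · rw [h0, hWtG_zero] at hwt
    exact (minWeight_pos hnm).ne' hwt.symm
  · rintro w ⟨x, hx, hx0, rfl⟩
    rw [grayImage_eq_range] at hx
    obtain ⟨v, rfl⟩ := hx
    exact minWeight_le_hWtG_encode hD hE hF (by omega) fun hv => hx0 (hv ▸ map_zero _)

end Weight

lemma sum_gray_mul_gray {ι : Type} [Fintype ι] (c c' : ι → R2) :
    ∑ i, gray c i * gray c' i =
      ∑ l, ((c l).fst * (c' l).fst + (c l).fst * (c' l).snd + (c l).snd * (c' l).fst) := by
  rw [Fintype.sum_sum_type, ← sum_add_distrib]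
  refine sum_congr rfl fun l _ => ?_
  have h2 : (2 : ZMod 2) = 0 := rfl
  simp only [gray, Sum.elim_inl, Sum.elim_inr]
  linear_combination (c l).snd * (c' l).snd * h2

lemma sum_sum_sum_add_eq_zero {α β γ R : Type*} [NonAssocSemiring R] {A : Finset α}
    {B : Finset β} {C : Finset γ} (hA : (#A : R) = 0) (hC : (#C : R) = 0) (f : α → β → R)
    (g : β → γ → R) : ∑ a ∈ A, ∑ b ∈ B, ∑ c ∈ C, (f a b + g b c) = 0 := by
  simp only [sum_add_distrib, sum_const, nsmul_eq_mul, hA, hC, zero_mul, zero_add]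

lemma natCast_card_deltaCompl_eq_zero {S : Finset (Fin m)} (hS : 1 ≤ #S) :
    (#(deltaCompl S) : ZMod 2) = 0 := by
  have hm : m ≠ 0 := by have := (card_le_univ S).trans (Fintype.card_fin m).le; omega
  rw [card_deltaCompl, ZMod.natCast_eq_zero_iff]
  exact Nat.dvd_sub (dvd_pow_self 2 hm) (dvd_pow_self 2 (by omega))

lemma grayImage_selfOrthogonal {D E F : Finset (Fin m)} (hD : 1 ≤ #D) (hF : 1 ≤ #F) :
    ∀ x ∈ grayImage m D E F, ∀ y ∈ grayImage m D E F, ∑ i, x i * y i = 0 := by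
  rintro _ ⟨p, q, r, rfl⟩ _ ⟨p', q', r', rfl⟩
  rw [sum_gray_mul_gray]
  convert sum_sum_sum_add_eq_zero (B := deltaCompl E) (natCast_card_deltaCompl_eq_zero hD)
    (natCast_card_deltaCompl_eq_zero hF)
    (fun t₁ t₂ => ip q t₂ * (ip q' t₂ + ip r' t₂ + ip p' t₁) + (ip r t₂ + ip p t₁) * ip q' t₂)
    (fun t₂ t₃ => ip q t₂ * ip q' t₃ + ip q t₃ * ip q' t₂) using 1
  rw [← sum_Lset]
  refine sum_congr rfl fun l _ => ?_
  simp only [cword_fst, cword_snd]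
  ring

end GrayCode

/-- for |D| = |E| = |F| = n ≤ m−2, Φ(C_L) is a binary linear code of
length 2(2^m − 2^n)³, with 2^(3m) codewords, minimum nonzero Hamming weight
(2^m − 2^n)·2^m·(2^m − 2^(n+1)); if moreover n ≥ 1 it is self-orthogonal. -/
theorem stmt19 (m n : ℕ) (hm : 2 ≤ m) (hn : n ≤ m - 2) (D E F : Finset (Fin m))
    (hD : D.card = n) (hE : E.card = n) (hF : F.card = n) :
    Fintype.card (↥(Lset m D E F) ⊕ ↥(Lset m D E F)) = 2 * (2 ^ m - 2 ^ n) ^ 3 ∧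
    Nat.card (grayImage m D E F) = 2 ^ (3 * m) ∧
    IsLeast {w : ℕ | ∃ x ∈ grayImage m D E F, x ≠ 0 ∧ hWtG x = w}
      ((2 ^ m - 2 ^ n) * 2 ^ m * (2 ^ m - 2 ^ (n + 1))) ∧
    (1 ≤ n →
      ∀ x ∈ grayImage m D E F, ∀ y ∈ grayImage m D E F, ∑ i, x i * y i = 0) := by
  have hnm : n + 2 ≤ m := by omega
  refine ⟨?_, GrayCode.natCard_grayImage hD hE hF hnm,
    GrayCode.isLeast_hWtG_grayImage hD hE hF hnm,
    fun hn₁ => GrayCode.grayImage_selfOrthogonal (hD ▸ hn₁) (hF ▸ hn₁)⟩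
  rw [Fintype.card_sum, Fintype.card_coe, GrayCode.card_Lset, hD, hE, hF]
  ring
end
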